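/- arXiv:1303.6064 — 8 statements merged into one kernel-verified Lean document; each statement's English description precedes it below -/
import Mathlib

section
/- For every sequence (k_p) of positive reals monotonically increasing to infinity, there exists a sequence (k'_p) of positive reals monotonically increasing to infinity with k'_p ≤ k_p for all p, such that for all positive integers p, q: ∏_{j=1}^{p+q} k'_j ≤ 2^{p+q} (∏_{j=1}^{p} k'_j)(∏_{j=1}^{q} k'_j). -/
open Finset Filter

private noncomputable def cseq (k : ℕ → ℝ) : ℕ → ℝ
  | 0 => k 1
  | n + 1 => min (cseq k n) (k (n + 1) / (n + 1))

private theorem cseq_succ (k : ℕ → ℝ) (n : ℕ) :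
    cseq k (n + 1) = min (cseq k n) (k (n + 1) / ((n : ℝ) + 1)) := rfl

theorem stmt0 (k : ℕ → ℝ) (hpos : ∀ p, 0 < k p) (hmono : Monotone k)
    (htend : Tendsto k atTop atTop) :
    ∃ k' : ℕ → ℝ, (∀ p, 0 < k' p) ∧ Monotone k' ∧ Tendsto k' atTop atTop ∧
      (∀ p, k' p ≤ k p) ∧
      ∀ p q : ℕ, 1 ≤ p → 1 ≤ q →
        ∏ j ∈ Finset.Icc 1 (p + q), k' j ≤
          2 ^ (p + q) * ((∏ j ∈ Finset.Icc 1 p, k' j) * ∏ j ∈ Finset.Icc 1 q, k' j) := by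
  classical
  have cpos : ∀ n, 0 < cseq k n := by
    intro n
    induction n with
    | zero => exact hpos 1
    | succ n ih =>
      rw [cseq_succ]
      exact lt_min ih (div_pos (hpos _) (by positivity))
  have cant : Antitone (cseq k) :=
    antitone_nat_of_succ_le fun n => by rw [cseq_succ]; exact min_le_left _ _
  have cle : ∀ n : ℕ, cseq k (n + 1) ≤ k (n + 1) / ((n : ℝ) + 1) := fun n => by
    rw [cseq_succ]; exact min_le_right _ _
  set k' : ℕ → ℝ := fun n => if n = 0 then k 0 else n * cseq k n with hk'
  have hk'pos' : ∀ n : ℕ, n ≠ 0 → k' n = (n : ℝ) * cseq k n := by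
    intro n hn; simp [hk', hn]
  have hk'succ : ∀ n : ℕ, k' (n + 1) = ((n : ℝ) + 1) * cseq k (n + 1) := by
    intro n; rw [hk'pos' (n + 1) (by omega)]; push_cast; ring
  have c1 : cseq k 1 = k 1 := by
    rw [cseq_succ]
    show min (k 1) _ = k 1
    simp
  have k'pos : ∀ n, 0 < k' n := by
    intro n
    cases n with
    | zero => simpa [hk'] using hpos 0
    | succ n =>
      rw [hk'succ]
      exact mul_pos (by positivity) (cpos _)
  have k'le : ∀ n, k' n ≤ k n := by
    intro n
    cases n with
    | zero => simp [hk']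
    | succ n =>
      rw [hk'succ]
      have h1 : (0 : ℝ) < (n : ℝ) + 1 := by positivity
      calc ((n : ℝ) + 1) * cseq k (n + 1) ≤ ((n : ℝ) + 1) * (k (n + 1) / ((n : ℝ) + 1)) :=
            mul_le_mul_of_nonneg_left (cle n) h1.le
        _ = k (n + 1) := by field_simp
  have k'step : ∀ n : ℕ, 1 ≤ n → k' n ≤ k' (n + 1) := by
    intro n hn
    rw [hk'pos' n (by omega), hk'succ n, cseq_succ]
    have hnR : (0 : ℝ) < (n : ℝ) := by exact_mod_cast hn
    rcases le_total (cseq k n) (k (n + 1) / ((n : ℝ) + 1)) with h | h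
    · rw [min_eq_left h]
      nlinarith [(cpos n).le]
    · rw [min_eq_right h]
      have h2 : ((n : ℝ) + 1) * (k (n + 1) / ((n : ℝ) + 1)) = k (n + 1) := by field_simp
      rw [h2]
      calc (n : ℝ) * cseq k n ≤ k n := by rw [← hk'pos' n (by omega)]; exact k'le n
        _ ≤ k (n + 1) := hmono (by omega)
  have k'mono : Monotone k' := by
    apply monotone_nat_of_le_succ
    intro n
    cases n with
    | zero =>
      have h0 : k' 0 = k 0 := by simp [hk']
      rw [h0, hk'succ, c1]
      simpa using hmono (Nat.zero_le 1)
    | succ n => exact k'step (n + 1) (by omega)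
  have lb : ∀ N : ℕ, 1 ≤ N → ∀ n, N ≤ n → min (cseq k N) (k N / n) ≤ cseq k n := by
    intro N hN n hn
    induction n, hn using Nat.le_induction with
    | base => exact min_le_left _ _
    | succ n hn ih =>
      have hn0 : (0 : ℝ) < (n : ℝ) := by
        have : 1 ≤ n := le_trans hN hn
        exact_mod_cast this
      rw [cseq_succ]
      refine le_min (le_trans (min_le_min le_rfl ?_) ih) (le_trans (min_le_right _ _) ?_)
      · push_cast
        gcongr
        · exact (hpos N).le
        · linarith
      · push_cast
        gcongr
        exact hmono (by omega)
  have k'tend : Tendsto k' atTop atTop := by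
    rw [tendsto_atTop]
    intro M
    obtain ⟨N, hNM, hN1⟩ :=
      ((htend.eventually_ge_atTop M).and (eventually_ge_atTop 1)).exists
    obtain ⟨n0, hn0⟩ := exists_nat_ge (M / cseq k N)
    filter_upwards [eventually_ge_atTop (max N (max n0 1))] with n hn
    have hnN : N ≤ n := le_trans (le_max_left _ _) hn
    have hn1 : 1 ≤ n := le_trans (le_max_of_le_right (le_max_right _ _)) hn
    have hnn0 : (n0 : ℝ) ≤ n := by
      exact_mod_cast le_trans (le_max_of_le_right (le_max_left _ _)) hn
    have hnR : (0 : ℝ) < (n : ℝ) := by exact_mod_cast hn1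
    have hlb := lb N hN1 n hnN
    rw [hk'pos' n (by omega)]
    rcases le_total (cseq k N) (k N / n) with h | h
    · rw [min_eq_left h] at hlb
      have hM : M ≤ (n : ℝ) * cseq k N := by
        rw [div_le_iff₀ (cpos N)] at hn0
        nlinarith [(cpos N).le]
      calc M ≤ (n : ℝ) * cseq k N := hM
        _ ≤ (n : ℝ) * cseq k n := by nlinarith
    · rw [min_eq_right h] at hlb
      have hnk : (n : ℝ) * (k N / n) = k N := by field_simp
      calc M ≤ k N := hNM
        _ = (n : ℝ) * (k N / n) := hnk.symm
        _ ≤ (n : ℝ) * cseq k n := by nlinarith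
  refine ⟨k', k'pos, k'mono, k'tend, k'le, ?_⟩
  intro p q hp hq
  have hsplit : ∏ j ∈ Icc 1 (p + q), k' j =
      (∏ j ∈ Icc 1 p, k' j) * ∏ j ∈ Ioc p (p + q), k' j := by
    rw [show (1 : ℕ) = 0 + 1 from rfl, Finset.Icc_add_one_left_eq_Ioc, Finset.Icc_add_one_left_eq_Ioc,
      Finset.prod_Ioc_consecutive k' (Nat.zero_le p) (Nat.le_add_right p q)]
  have hshift : ∏ j ∈ Ioc p (p + q), k' j = ∏ i ∈ Icc 1 q, k' (p + i) := by
    rw [show Ioc p (p + q) = Ioc (p + 0) (p + q) by rw [Nat.add_zero],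
      ← Finset.map_add_left_Ioc, Finset.prod_map]
    rw [show (1 : ℕ) = 0 + 1 from rfl, Finset.Icc_add_one_left_eq_Ioc]
    rfl
  have key : ∀ i ∈ Icc 1 q, k' (p + i) ≤ (((p : ℝ) + i) / i) * k' i := by
    intro i hi
    have hi1 : 1 ≤ i := (mem_Icc.mp hi).1
    have hiR : (0 : ℝ) < (i : ℝ) := by exact_mod_cast hi1
    rw [hk'pos' (p + i) (by omega), hk'pos' i (by omega)]
    have h1 : cseq k (p + i) ≤ cseq k i := cant (Nat.le_add_left i p)
    have h2 : (((p : ℝ) + i) / i) * ((i : ℝ) * cseq k i) = ((p : ℝ) + i) * cseq k i := by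
      field_simp
    rw [h2]
    push_cast
    nlinarith [(cpos (p + i)).le, (cpos i).le]
  have prodle : ∏ i ∈ Icc 1 q, k' (p + i) ≤
      ∏ i ∈ Icc 1 q, ((((p : ℝ) + i) / i) * k' i) := by
    apply Finset.prod_le_prod
    · intro i _; exact (k'pos _).le
    · exact key
  have binom : ∀ m : ℕ, ∏ i ∈ Icc 1 m, (((p : ℝ) + i) / i) = ((p + m).choose m : ℝ) := by
    intro m
    induction m with
    | zero => simp
    | succ m ih =>
      rw [Finset.prod_Icc_succ_top (Nat.succ_le_succ (Nat.zero_le m)), ih]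
      have h := Nat.add_one_mul_choose_eq (p + m) m
      have h' : (((p : ℝ) + m + 1) * ((p + m).choose m : ℝ)) =
          (((p + m + 1).choose (m + 1) : ℝ) * ((m : ℝ) + 1)) := by exact_mod_cast congrArg Nat.cast h
      have hm1 : ((m : ℝ) + 1) ≠ 0 := by positivity
      rw [show p + (m + 1) = p + m + 1 by omega]
      push_cast
      field_simp
      linear_combination h'
  have choosele : ((p + q).choose q : ℝ) ≤ 2 ^ (p + q) := by
    have h1 : (p + q).choose q ≤ ∑ i ∈ range (p + q + 1), (p + q).choose i :=
      Finset.single_le_sum (fun i _ => Nat.zero_le _) (mem_range.mpr (by omega))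
    have h2 : (p + q).choose q ≤ 2 ^ (p + q) := by rw [← Nat.sum_range_choose]; exact h1
    exact_mod_cast h2
  have hP : (0 : ℝ) ≤ ∏ j ∈ Icc 1 p, k' j := (Finset.prod_pos fun i _ => k'pos i).le
  have hQ : (0 : ℝ) ≤ ∏ i ∈ Icc 1 q, k' i := (Finset.prod_pos fun i _ => k'pos i).le
  calc ∏ j ∈ Icc 1 (p + q), k' j
      = (∏ j ∈ Icc 1 p, k' j) * ∏ i ∈ Icc 1 q, k' (p + i) := by rw [hsplit, hshift]
    _ ≤ (∏ j ∈ Icc 1 p, k' j) * ∏ i ∈ Icc 1 q, ((((p : ℝ) + i) / i) * k' i) :=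
        mul_le_mul_of_nonneg_left prodle hP
    _ = (∏ i ∈ Icc 1 q, (((p : ℝ) + i) / i)) *
        ((∏ j ∈ Icc 1 p, k' j) * ∏ i ∈ Icc 1 q, k' i) := by
        rw [Finset.prod_mul_distrib]; ring
    _ ≤ 2 ^ (p + q) * ((∏ j ∈ Icc 1 p, k' j) * ∏ i ∈ Icc 1 q, k' i) := by
        apply mul_le_mul_of_nonneg_right
        · rw [binom q]; exact choosele
        · exact mul_nonneg hP hQ
end

section
/- Let M_p be a sequence of positive numbers with M_0 = 1 satisfying (M.1) and (M.2) with constants c_0, H, let m_p = M_p/M_{p-1}, let (t_p) be a sequence of positive reals monotonically increasing to infinity, and let m > 0. Then there exists a constant c > 0, depending only on M_p, (t_p), and m but not on n, such that for all n ≥ 1, N_{t_p}(m·m_n) ≤ n ln H + ln c, where N_{t_p}(ρ) = sup_{p∈ℕ} log_+ (ρ^p / (M_p ∏_{j=1}^p t_j)). -/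
open Finset Filter

theorem stmt2 (M : ℕ → ℝ) (c0 H : ℝ) (hM0 : M 0 = 1) (hMpos : ∀ p, 0 < M p)
    (hc0 : 1 ≤ c0) (hH : 1 ≤ H)
    (hM1 : ∀ p : ℕ, 1 ≤ p → (M p) ^ 2 ≤ M (p - 1) * M (p + 1))
    (hM2 : ∀ p q : ℕ, q ≤ p → M p ≤ c0 * H ^ p * (M (p - q) * M q))
    (t : ℕ → ℝ) (htpos : ∀ p, 0 < t p) (htmono : Monotone t)
    (httend : Tendsto t atTop atTop)
    (m : ℝ) (hm : 0 < m) :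
    ∃ c : ℝ, 0 < c ∧ ∀ n : ℕ, 1 ≤ n → ∀ p : ℕ,
      max 0 (Real.log ((m * (M n / M (n - 1))) ^ p /
          (M p * ∏ j ∈ Finset.Icc 1 p, t j))) ≤
        n * Real.log H + Real.log c := by
  have hH0 : (0:ℝ) < H := lt_of_lt_of_le one_pos hH
  -- monotonicity of m_j = M j / M (j-1)
  have hstep : ∀ k : ℕ, 1 ≤ k → M k / M (k - 1) ≤ M (k + 1) / M k := by
    intro k hk
    rw [div_le_div_iff₀ (hMpos _) (hMpos _)]
    have := hM1 k hk
    nlinarith [hMpos k, hMpos (k-1), hMpos (k+1)]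
  have hmono : ∀ j : ℕ, 1 ≤ j → ∀ d : ℕ, M j / M (j - 1) ≤ M (j + d) / M (j + d - 1) := by
    intro j hj d
    induction d with
    | zero => simp
    | succ d ih =>
      refine ih.trans ?_
      have h1 : 1 ≤ j + d := le_trans hj (Nat.le_add_right _ _)
      have := hstep (j + d) h1
      have e : j + (d + 1) - 1 = j + d := by omega
      have e2 : j + (d + 1) = j + d + 1 := by omega
      rw [e, e2]
      exact this
  -- m_n^p * M n ≤ M (n+p)
  have hpow : ∀ n : ℕ, 1 ≤ n → ∀ p : ℕ, (M n / M (n - 1)) ^ p * M n ≤ M (n + p) := by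
    intro n hn p
    induction p with
    | zero => simp
    | succ p ih =>
      have hmn : M n / M (n - 1) ≤ M (n + p + 1) / M (n + p) := by
        have := hmono n hn (p + 1)
        have e : n + (p + 1) - 1 = n + p := by omega
        have e2 : n + (p + 1) = n + p + 1 := by omega
        rwa [e, e2] at this
      have hmnpos : 0 < M n / M (n - 1) := div_pos (hMpos _) (hMpos _)
      calc (M n / M (n - 1)) ^ (p + 1) * M n
          = (M n / M (n - 1)) * ((M n / M (n - 1)) ^ p * M n) := by ring
        _ ≤ (M (n + p + 1) / M (n + p)) * M (n + p) := by
            have h1 := hMpos n; have h2 := hMpos (n - 1)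
            apply mul_le_mul hmn ih (by positivity)
            exact le_of_lt (div_pos (hMpos _) (hMpos _))
        _ = M (n + p + 1) := div_mul_cancel₀ _ (ne_of_gt (hMpos _))
  -- choose j0 such that t j ≥ m*H for j ≥ j0
  obtain ⟨j0, hj0⟩ := (httend.eventually_ge_atTop (m * H)).exists_forall_of_atTop
  set g : ℕ → ℝ := fun j => max 1 (m * H / t j) with hg
  have hg1 : ∀ j, 1 ≤ g j := fun j => le_max_left _ _
  set C : ℝ := ∏ j ∈ Finset.Icc 1 j0, g j with hC
  have hone : ∀ s : Finset ℕ, 1 ≤ ∏ j ∈ s, g j := by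
    intro s
    have h := Finset.prod_le_prod (s := s) (f := fun _ => (1:ℝ)) (g := g)
      (fun _ _ => zero_le_one) (fun j _ => hg1 j)
    simpa using h
  have hC1 : 1 ≤ C := hone _
  have hC0 : 0 < C := lt_of_lt_of_le one_pos hC1
  -- the product bound : ∏_{j=1}^p (m*H / t j) ≤ C
  have hprodC : ∀ p : ℕ, (∏ j ∈ Finset.Icc 1 p, (m * H / t j)) ≤ C := by
    intro p
    have h1 : (∏ j ∈ Finset.Icc 1 p, (m * H / t j)) ≤ ∏ j ∈ Finset.Icc 1 p, g j := by
      apply Finset.prod_le_prod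
      · intro j _; exact le_of_lt (div_pos (mul_pos hm hH0) (htpos j))
      · intro j _; exact le_max_right _ _
    refine h1.trans ?_
    have e : Finset.Icc 1 p = Finset.Ioc 0 p := by rw [← Finset.Icc_add_one_left_eq_Ioc]; rfl
    have e2 : Finset.Icc 1 j0 = Finset.Ioc 0 j0 := by rw [← Finset.Icc_add_one_left_eq_Ioc]; rfl
    have split1 : (∏ j ∈ Finset.Ioc 0 p, g j) * ∏ j ∈ Finset.Ioc p (max p j0), g j
        = ∏ j ∈ Finset.Ioc 0 (max p j0), g j :=
      Finset.prod_Ioc_consecutive g (Nat.zero_le p) (le_max_left p j0)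
    have split2 : (∏ j ∈ Finset.Ioc 0 j0, g j) * ∏ j ∈ Finset.Ioc j0 (max p j0), g j
        = ∏ j ∈ Finset.Ioc 0 (max p j0), g j :=
      Finset.prod_Ioc_consecutive g (Nat.zero_le j0) (le_max_right p j0)
    have htail : (∏ j ∈ Finset.Ioc j0 (max p j0), g j) = 1 := by
      apply Finset.prod_eq_one
      intro j hj
      rw [Finset.mem_Ioc] at hj
      have ht : m * H ≤ t j := hj0 j (le_of_lt hj.1)
      simp only [hg]
      exact max_eq_left ((div_le_one (htpos j)).mpr ht)
    have hpos1 : (0:ℝ) ≤ ∏ j ∈ Finset.Ioc 0 p, g j := by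
      have := hone (Finset.Ioc 0 p); linarith
    calc (∏ j ∈ Finset.Icc 1 p, g j)
        = ∏ j ∈ Finset.Ioc 0 p, g j := by rw [e]
      _ ≤ (∏ j ∈ Finset.Ioc 0 p, g j) * ∏ j ∈ Finset.Ioc p (max p j0), g j :=
          le_mul_of_one_le_right hpos1 (hone _)
      _ = ∏ j ∈ Finset.Ioc 0 (max p j0), g j := split1
      _ = (∏ j ∈ Finset.Ioc 0 j0, g j) * ∏ j ∈ Finset.Ioc j0 (max p j0), g j := split2.symm
      _ = C := by rw [htail, mul_one, hC, e2]
  refine ⟨c0 * C, mul_pos (lt_of_lt_of_le one_pos hc0) hC0, ?_⟩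
  intro n hn p
  have hRle : (m * (M n / M (n - 1))) ^ p / (M p * ∏ j ∈ Finset.Icc 1 p, t j)
      ≤ c0 * C * H ^ n := by
    have hTpos : 0 < ∏ j ∈ Finset.Icc 1 p, t j :=
      Finset.prod_pos (fun j _ => htpos j)
    rw [div_le_iff₀ (mul_pos (hMpos p) hTpos)]
    have h1 : (m * (M n / M (n - 1))) ^ p = m ^ p * (M n / M (n - 1)) ^ p := mul_pow _ _ _
    have h2 : (M n / M (n - 1)) ^ p ≤ M (n + p) / M n := by
      rw [le_div_iff₀ (hMpos n)]
      exact hpow n hn p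
    have h3 : M (n + p) ≤ c0 * H ^ (n + p) * (M n * M p) := by
      have := hM2 (n + p) p (Nat.le_add_left p n)
      have e : n + p - p = n := by omega
      rwa [e] at this
    have h4 : (M n / M (n - 1)) ^ p ≤ c0 * H ^ (n + p) * M p := by
      refine h2.trans ?_
      rw [div_le_iff₀ (hMpos n)]
      calc M (n + p) ≤ c0 * H ^ (n + p) * (M n * M p) := h3
        _ = c0 * H ^ (n + p) * M p * M n := by ring
    have h5 : m ^ p * (M n / M (n - 1)) ^ p ≤ m ^ p * (c0 * H ^ (n + p) * M p) :=
      mul_le_mul_of_nonneg_left h4 (by positivity)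
    rw [h1]
    refine h5.trans ?_
    -- m^p * c0 * H^(n+p) * M p ≤ c0 * C * H^n * (M p * T p)
    -- i.e. (m H)^p ≤ C * T p, since ∏ (mH/t j) ≤ C
    have hprod := hprodC p
    have hmHp : (m * H) ^ p ≤ C * ∏ j ∈ Finset.Icc 1 p, t j := by
      have e : (∏ j ∈ Finset.Icc 1 p, (m * H / t j))
          = (m * H) ^ p / ∏ j ∈ Finset.Icc 1 p, t j := by
        rw [Finset.prod_div_distrib, Finset.prod_const]
        congr 1
        rw [Nat.card_Icc]
        simp
      rw [e, div_le_iff₀ hTpos] at hprod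
      exact hprod
    have hHpow : H ^ (n + p) = H ^ n * H ^ p := pow_add H n p
    calc m ^ p * (c0 * H ^ (n + p) * M p)
        = c0 * H ^ n * M p * (m * H) ^ p := by rw [hHpow, mul_pow]; ring
      _ ≤ c0 * H ^ n * M p * (C * ∏ j ∈ Finset.Icc 1 p, t j) := by
          have := hMpos p
          apply mul_le_mul_of_nonneg_left hmHp
          positivity
      _ = c0 * C * H ^ n * (M p * ∏ j ∈ Finset.Icc 1 p, t j) := by ring
  have hRpos : 0 < (m * (M n / M (n - 1))) ^ p / (M p * ∏ j ∈ Finset.Icc 1 p, t j) := by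
    have hTpos : 0 < ∏ j ∈ Finset.Icc 1 p, t j :=
      Finset.prod_pos (fun j _ => htpos j)
    have := hMpos n; have := hMpos (n-1); have := hMpos p
    positivity
  have hrhs : n * Real.log H + Real.log (c0 * C)
      = Real.log (c0 * C * H ^ n) := by
    have h := Real.log_mul (show c0 * C ≠ 0 by positivity) (show H ^ n ≠ 0 by positivity)
    rw [h, Real.log_pow]
    push_cast; ring
  rw [max_le_iff]
  constructor
  · have h1 : 0 ≤ (n:ℝ) * Real.log H :=
      mul_nonneg (Nat.cast_nonneg n) (Real.log_nonneg hH)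
    have h2 : 0 ≤ Real.log (c0 * C) := by
      apply Real.log_nonneg
      calc (1:ℝ) = 1 * 1 := by ring
        _ ≤ c0 * C := mul_le_mul hc0 hC1 zero_le_one (le_trans zero_le_one hc0)
    linarith
  · rw [hrhs]
    exact Real.log_le_log hRpos hRle
end

section
/- Let M_p be a sequence of positive numbers with M_0 = 1 satisfying (M.1), (M.2), and (M.3), with c_0 the constant from (M.2) and (M.3). Let 0 < l ≤ 1 and B > 1. Then there exist C > 0 (depending on B, l, M_p) and m̃ > 0 (depending only on B and M_p, not on l) such that for all ρ ≥ B M_1: inf { M_n / (l^n ρ^n) : n ≥ 1, ρ ≥ B m_n } ≤ C e^{-M(l m̃ ρ)}, where m_n = M_n/M_{n-1} and M is the associated function of M_p. -/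
open Finset Filter

private lemma prodLE (M : ℕ → ℝ) (hMpos : ∀ p, 0 < M p) (t : ℝ) (ht : 0 < t) :
    ∀ (a k : ℕ), (∀ i, a < i → i ≤ a + k → M i / M (i - 1) ≤ t) →
      M (a + k) ≤ M a * t ^ k := by
  intro a k
  induction k with
  | zero => intro _; simp
  | succ k ih =>
    intro h
    have h1 : M (a + k) ≤ M a * t ^ k := ih fun i hi1 hi2 => h i hi1 (by omega)
    have h2 : M (a + k + 1) / M (a + k) ≤ t := by
      have := h (a + k + 1) (by omega) (by omega)
      simpa using this
    have h3 : M (a + k + 1) ≤ t * M (a + k) := (div_le_iff₀ (hMpos _)).mp h2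
    calc M (a + (k + 1)) = M (a + k + 1) := by ring_nf
      _ ≤ t * M (a + k) := h3
      _ ≤ t * (M a * t ^ k) := by
          exact mul_le_mul_of_nonneg_left h1 ht.le
      _ = M a * t ^ (k + 1) := by ring

private lemma prodGE (M : ℕ → ℝ) (hMpos : ∀ p, 0 < M p) (t : ℝ) (ht : 0 < t) :
    ∀ (a k : ℕ), (∀ i, a < i → i ≤ a + k → t ≤ M i / M (i - 1)) →
      M a * t ^ k ≤ M (a + k) := by
  intro a k
  induction k with
  | zero => intro _; simp
  | succ k ih =>
    intro h
    have h1 : M a * t ^ k ≤ M (a + k) := ih fun i hi1 hi2 => h i hi1 (by omega)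
    have h2 : t ≤ M (a + k + 1) / M (a + k) := by
      have := h (a + k + 1) (by omega) (by omega)
      simpa using this
    have h3 : t * M (a + k) ≤ M (a + k + 1) := by
      rw [le_div_iff₀ (hMpos _)] at h2
      linarith [h2]
    calc M a * t ^ (k + 1) = t * (M a * t ^ k) := by ring
      _ ≤ t * M (a + k) := mul_le_mul_of_nonneg_left h1 ht.le
      _ ≤ M (a + k + 1) := h3
      _ = M (a + (k + 1)) := by ring_nf

private lemma mQuotMono (M : ℕ → ℝ) (hMpos : ∀ p, 0 < M p)
    (hM1 : ∀ p : ℕ, 1 ≤ p → (M p) ^ 2 ≤ M (p - 1) * M (p + 1)) :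
    ∀ (p q : ℕ), 1 ≤ p → p ≤ q → M p / M (p - 1) ≤ M q / M (q - 1) := by
  intro p q hp hpq
  induction q with
  | zero => omega
  | succ q ih =>
    rcases Nat.lt_or_ge p (q + 1) with hlt | hge
    · have hq : 1 ≤ q := by omega
      have step : M q / M (q - 1) ≤ M (q + 1) / M q := by
        rw [div_le_div_iff₀ (hMpos _) (hMpos _)]
        nlinarith [hM1 q hq]
      have : (q + 1) - 1 = q := rfl
      rw [this]
      exact (ih (by omega)).trans step
    · have : p = q + 1 := by omega
      subst this
      exact le_rfl

theorem stmt3 (M : ℕ → ℝ) (c0 H : ℝ) (hM0 : M 0 = 1) (hMpos : ∀ p, 0 < M p)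
    (hc0 : 1 ≤ c0) (hH : 1 ≤ H)
    (hM1 : ∀ p : ℕ, 1 ≤ p → (M p) ^ 2 ≤ M (p - 1) * M (p + 1))
    (hM2 : ∀ p q : ℕ, q ≤ p → M p ≤ c0 * H ^ p * (M (p - q) * M q))
    (hM3 : ∀ q : ℕ, 1 ≤ q →
      ∑' j : ℕ, M (q + j) / M (q + j + 1) ≤ c0 * q * (M q / M (q + 1)))
    (B : ℝ) (hB : 1 < B) :
    ∃ mt : ℝ, 0 < mt ∧ ∀ l : ℝ, 0 < l → l ≤ 1 →
      ∃ C : ℝ, 0 < C ∧ ∀ ρ : ℝ, B * M 1 ≤ ρ →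
        sInf {x : ℝ | ∃ n : ℕ, 1 ≤ n ∧ B * (M n / M (n - 1)) ≤ ρ ∧
            x = M n / (l ^ n * ρ ^ n)} ≤
          C * Real.exp (-(⨆ p : ℕ, max 0 (Real.log ((l * mt * ρ) ^ p / M p)))) := by
  have hB0 : (0:ℝ) < B := lt_trans one_pos hB
  refine ⟨1 / (2 * B), by positivity, ?_⟩
  intro l hl hl1
  refine ⟨Real.exp 1 / (l * B) + Real.exp 1, by positivity, ?_⟩
  intro ρ hρ
  set C := Real.exp 1 / (l * B) + Real.exp 1 with hC
  have hC1 : (1:ℝ) ≤ C := by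
    rw [hC]
    have h1 : (1:ℝ) ≤ Real.exp 1 := Real.one_le_exp (by norm_num)
    have h2 : 0 < Real.exp 1 / (l * B) := by positivity
    linarith
  have hρ0 : 0 < ρ := lt_of_lt_of_le (mul_pos hB0 (hMpos 1)) hρ
  set t := l * (1 / (2 * B)) * ρ with htdef
  have ht0 : 0 < t := by positivity
  set f : ℕ → ℝ := fun p => max 0 (Real.log (t ^ p / M p)) with hf
  set S := ⨆ p : ℕ, f p with hSdef
  -- the goal is `sInf ... ≤ C * exp (-S)`
  show sInf {x : ℝ | ∃ n : ℕ, 1 ≤ n ∧ B * (M n / M (n - 1)) ≤ ρ ∧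
      x = M n / (l ^ n * ρ ^ n)} ≤ C * Real.exp (-S)
  have hf0 : f 0 = 0 := by simp [hf, hM0]
  -- basic facts
  have hBt : B * t ≤ ρ := by
    have hBt' : B * t = l * ρ / 2 := by
      rw [htdef]; field_simp
    rw [hBt']
    nlinarith
  have hbdb : BddBelow {x : ℝ | ∃ n : ℕ, 1 ≤ n ∧ B * (M n / M (n - 1)) ≤ ρ ∧
      x = M n / (l ^ n * ρ ^ n)} := by
    refine ⟨0, ?_⟩
    rintro x ⟨n, -, -, rfl⟩
    have := hMpos n
    positivity
  have hinf : ∀ n : ℕ, 1 ≤ n → B * (M n / M (n - 1)) ≤ ρ →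
      sInf {x : ℝ | ∃ n : ℕ, 1 ≤ n ∧ B * (M n / M (n - 1)) ≤ ρ ∧
        x = M n / (l ^ n * ρ ^ n)} ≤ M n / (l ^ n * ρ ^ n) := by
    intro n hn hc
    exact csInf_le hbdb ⟨n, hn, hc, rfl⟩
  have h1c : B * (M 1 / M (1 - 1)) ≤ ρ := by
    simpa [hM0] using hρ
  -- bound for the n = 1 element
  have h1e : M 1 / (l ^ 1 * ρ ^ 1) ≤ 1 / (l * B) := by
    rw [div_le_div_iff₀ (by positivity) (by positivity)]
    have : B * M 1 ≤ ρ := hρ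
    calc M 1 * (l * B) = l * (B * M 1) := by ring
      _ ≤ l * ρ := mul_le_mul_of_nonneg_left this hl.le
      _ = 1 * (l ^ 1 * ρ ^ 1) := by ring
  -- t ≤ l * ρ, so t^n ≤ l^n ρ^n
  have htlρ : t ≤ l * ρ := by
    rw [htdef]
    have h1 : 1 / (2 * B) ≤ 1 := by
      rw [div_le_one (by positivity)]; nlinarith
    have h2 := mul_le_mul_of_nonneg_right (mul_le_mul_of_nonneg_left h1 hl.le) hρ0.le
    calc l * (1 / (2 * B)) * ρ ≤ l * 1 * ρ := h2
      _ = l * ρ := by ring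
  have helem : ∀ n : ℕ, M n / (l ^ n * ρ ^ n) ≤ M n / t ^ n := by
    intro n
    apply div_le_div_of_nonneg_left (hMpos n).le (pow_pos ht0 n)
    calc t ^ n ≤ (l * ρ) ^ n := pow_le_pow_left₀ ht0.le htlρ n
      _ = l ^ n * ρ ^ n := mul_pow l ρ n
  -- the "use n = 1 with S = 0" route
  have route1 : S = 0 →
      sInf {x : ℝ | ∃ n : ℕ, 1 ≤ n ∧ B * (M n / M (n - 1)) ≤ ρ ∧
        x = M n / (l ^ n * ρ ^ n)} ≤ C * Real.exp (-S) := by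
    intro hS0
    rw [hS0]
    simp only [neg_zero, Real.exp_zero, mul_one]
    refine (hinf 1 le_rfl h1c).trans (h1e.trans ?_)
    have h1 : (1:ℝ) ≤ Real.exp 1 := Real.one_le_exp (by norm_num)
    have h2 : 1 / (l * B) ≤ Real.exp 1 / (l * B) :=
      (div_le_div_iff_of_pos_right (by positivity)).mpr h1
    have h3 : 0 < Real.exp 1 := Real.exp_pos 1
    rw [hC]; linarith
  by_cases hall : ∀ q : ℕ, 1 ≤ q → M q / M (q - 1) ≤ t
  · -- every quotient is ≤ t : every n satisfies the constraint
    have hconstr : ∀ n : ℕ, 1 ≤ n → B * (M n / M (n - 1)) ≤ ρ := by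
      intro n hn
      exact (mul_le_mul_of_nonneg_left (hall n hn) hB0.le).trans hBt
    by_cases hbd : BddAbove (Set.range f)
    · have hS0 : 0 ≤ S := hf0 ▸ le_ciSup hbd 0
      rcases le_or_gt S 1 with hS1 | hS1
      · -- S ≤ 1 : use n = 1
        refine (hinf 1 le_rfl h1c).trans (h1e.trans ?_)
        have hee : Real.exp (-(1:ℝ)) ≤ Real.exp (-S) := Real.exp_le_exp.mpr (by linarith)
        have hkey : 1 / (l * B) ≤ Real.exp 1 / (l * B) * Real.exp (-S) := by
          have h1 : Real.exp 1 * Real.exp (-1) = 1 := by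
            rw [← Real.exp_add]; norm_num
          have h2 : Real.exp 1 / (l * B) * Real.exp (-1) = 1 / (l * B) := by
            field_simp
            linarith [h1]
          rw [← h2]
          have : 0 < Real.exp 1 / (l * B) := by positivity
          nlinarith
        have h4 : 0 ≤ Real.exp 1 * Real.exp (-S) := by positivity
        rw [hC]; nlinarith [hkey]
      · -- S > 1 : pick n with f n > S - 1
        obtain ⟨n, hn⟩ := exists_lt_of_lt_ciSup (show S - 1 < S by linarith)
        have hn0 : 1 ≤ n := by
          rcases Nat.eq_zero_or_pos n with h | h
          · subst h; rw [hf0] at hn; linarith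
          · exact h
        have hflog : S - 1 < Real.log (t ^ n / M n) := by
          rcases lt_max_iff.mp hn with h | h
          · linarith
          · exact h
        have hexp : Real.exp (S - 1) < t ^ n / M n :=
          (Real.lt_log_iff_exp_lt (div_pos (pow_pos ht0 n) (hMpos n))).mp hflog
        have hMnt : M n / t ^ n ≤ Real.exp 1 * Real.exp (-S) := by
          have key : Real.exp 1 * Real.exp (-S) * Real.exp (S - 1) = 1 := by
            rw [← Real.exp_add, ← Real.exp_add,
              show (1:ℝ) + -S + (S - 1) = 0 from by ring, Real.exp_zero]
          rw [div_le_iff₀ (pow_pos ht0 n)]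
          have h5 : M n * Real.exp (S - 1) < t ^ n := by
            rw [lt_div_iff₀ (hMpos n)] at hexp
            calc M n * Real.exp (S - 1) = Real.exp (S - 1) * M n := mul_comm _ _
              _ < t ^ n := hexp
          have h6 : 0 < Real.exp 1 * Real.exp (-S) := by positivity
          have h9 : Real.exp 1 * Real.exp (-S) * (M n * Real.exp (S - 1)) <
              Real.exp 1 * Real.exp (-S) * t ^ n := mul_lt_mul_of_pos_left h5 h6
          have h10 : Real.exp 1 * Real.exp (-S) * (M n * Real.exp (S - 1)) = M n := by
            calc Real.exp 1 * Real.exp (-S) * (M n * Real.exp (S - 1))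
                = Real.exp 1 * Real.exp (-S) * Real.exp (S - 1) * M n := by ring
              _ = M n := by rw [key]; ring
          linarith
        refine (hinf n hn0 (hconstr n hn0)).trans ((helem n).trans (hMnt.trans ?_))
        have h7 : Real.exp 1 ≤ C := by
          rw [hC]
          have : 0 < Real.exp 1 / (l * B) := by positivity
          linarith
        have h8 : 0 < Real.exp (-S) := Real.exp_pos _
        exact mul_le_mul_of_nonneg_right h7 h8.le
    · -- sup not bounded: junk value 0
      exact route1 (Real.iSup_of_not_bddAbove hbd)
  · -- there is q with m_q > t
    push_neg at hall
    have hex : ∃ q : ℕ, 1 ≤ q ∧ t < M q / M (q - 1) := by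
      obtain ⟨q, hq1, hq2⟩ := hall
      exact ⟨q, hq1, hq2⟩
    classical
    set q0 := Nat.find hex with hq0def
    obtain ⟨hq01, hq0t⟩ := Nat.find_spec hex
    have hsmall : ∀ p : ℕ, 1 ≤ p → p < q0 → M p / M (p - 1) ≤ t := by
      intro p h1 h2
      by_contra h
      exact Nat.find_min hex h2 ⟨h1, lt_of_not_ge h⟩
    have hbig : ∀ p : ℕ, q0 ≤ p → t < M p / M (p - 1) := by
      intro p hp
      exact lt_of_lt_of_le hq0t (mQuotMono M hMpos hM1 q0 p hq01 hp)
    set ps := q0 - 1 with hpsdef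
    have hps_lt : ps < q0 := by omega
    -- key comparison: t^p / M p ≤ t^ps / M ps for all p
    have hcmp : ∀ p : ℕ, t ^ p / M p ≤ t ^ ps / M ps := by
      intro p
      rcases le_or_gt p ps with hle | hgt
      · have hMps : M ps ≤ M p * t ^ (ps - p) := by
          have := prodLE M hMpos t ht0 p (ps - p) (fun i hi1 hi2 =>
            hsmall i (by omega) (by omega))
          have heq : p + (ps - p) = ps := by omega
          rwa [heq] at this
        rw [div_le_div_iff₀ (hMpos p) (hMpos ps)]
        have hpow : t ^ p * t ^ (ps - p) = t ^ ps := by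
          rw [← pow_add]; congr 1; omega
        calc t ^ p * M ps ≤ t ^ p * (M p * t ^ (ps - p)) := by
              exact mul_le_mul_of_nonneg_left hMps (pow_nonneg ht0.le p)
          _ = (t ^ p * t ^ (ps - p)) * M p := by ring
          _ = t ^ ps * M p := by rw [hpow]
      · have hMp : M ps * t ^ (p - ps) ≤ M p := by
          have := prodGE M hMpos t ht0 ps (p - ps) (fun i hi1 hi2 =>
            (hbig i (by omega)).le)
          have heq : ps + (p - ps) = p := by omega
          rwa [heq] at this
        rw [div_le_div_iff₀ (hMpos p) (hMpos ps)]
        have hpow : t ^ ps * t ^ (p - ps) = t ^ p := by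
          rw [← pow_add]; congr 1; omega
        calc t ^ p * M ps = t ^ ps * (M ps * t ^ (p - ps)) := by
              rw [← hpow]; ring
          _ ≤ t ^ ps * M p := by
              exact mul_le_mul_of_nonneg_left hMp (pow_nonneg ht0.le ps)
    have hfle : ∀ p : ℕ, f p ≤ f ps := by
      intro p
      refine max_le_max le_rfl ?_
      exact Real.log_le_log (div_pos (pow_pos ht0 p) (hMpos p)) (hcmp p)
    have hbdd : BddAbove (Set.range f) := by
      refine ⟨f ps, ?_⟩
      rintro x ⟨p, rfl⟩
      exact hfle p
    have hSe : S = f ps := le_antisymm (ciSup_le hfle) (le_ciSup hbdd ps)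
    rcases Nat.eq_zero_or_pos ps with hps0 | hps1
    · exact route1 (by rw [hSe, hps0, hf0])
    · -- use n = ps
      have hpsle : M ps / M (ps - 1) ≤ t := hsmall ps hps1 hps_lt
      have hcn : B * (M ps / M (ps - 1)) ≤ ρ :=
        (mul_le_mul_of_nonneg_left hpsle hB0.le).trans hBt
      have hMle : M ps ≤ t ^ ps := by
        have := prodLE M hMpos t ht0 0 ps (fun i hi1 hi2 =>
          hsmall i (by omega) (by omega))
        simpa [hM0] using this
      have hlog0 : 0 ≤ Real.log (t ^ ps / M ps) := by
        apply Real.log_nonneg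
        rw [le_div_iff₀ (hMpos ps)]
        simpa using hMle
      have hfps : f ps = Real.log (t ^ ps / M ps) := max_eq_right hlog0
      have hexpS : Real.exp (-S) = M ps / t ^ ps := by
        rw [hSe, hfps, Real.exp_neg, Real.exp_log (div_pos (pow_pos ht0 ps) (hMpos ps)), inv_div]
      refine (hinf ps hps1 hcn).trans ((helem ps).trans ?_)
      rw [hexpS]
      have hpos : 0 < M ps / t ^ ps := div_pos (hMpos ps) (pow_pos ht0 ps)
      calc M ps / t ^ ps = 1 * (M ps / t ^ ps) := (one_mul _).symm
        _ ≤ C * (M ps / t ^ ps) := mul_le_mul_of_nonneg_right hC1 hpos.le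
end

section
/- Let M_p satisfy (M.1) with M_0 = 1 and let m_p = M_p/M_{p-1}. Then for every n ≥ 1 and every natural number p, the associated function satisfies: if p ≥ n then the supremum defining M(m_n) is attained among indices ≤ n, i.e. M(m_n) = sup_{p ≤ n} log_+(m_n^p / M_p). Consequently, if additionally (M.2) holds with constants c_0, H, then M(m_n) ≤ 2n ln H + ln c_0. -/
open Finset Filter

theorem stmt5 (M : ℕ → ℝ) (c0 H : ℝ) (hM0 : M 0 = 1) (hMpos : ∀ p, 0 < M p)
    (hc0 : 1 ≤ c0) (hH : 1 ≤ H)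
    (hM1 : ∀ p : ℕ, 1 ≤ p → (M p) ^ 2 ≤ M (p - 1) * M (p + 1))
    (hM2 : ∀ p q : ℕ, q ≤ p → M p ≤ c0 * H ^ p * (M (p - q) * M q)) :
    ∀ n : ℕ, 1 ≤ n →
      ((⨆ p : ℕ, max 0 (Real.log ((M n / M (n - 1)) ^ p / M p))) =
        ⨆ p : Fin (n + 1), max 0 (Real.log ((M n / M (n - 1)) ^ (p : ℕ) / M p))) ∧
      (⨆ p : ℕ, max 0 (Real.log ((M n / M (n - 1)) ^ p / M p))) ≤
        2 * n * Real.log H + Real.log c0 := by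
  intro n hn
  set m : ℝ := M n / M (n - 1) with hmdef
  have hmpos : 0 < m := div_pos (hMpos n) (hMpos (n - 1))
  set r : ℕ → ℝ := fun q => M (q + 1) / M q with hrdef
  have hrpos : ∀ q, 0 < r q := fun q => div_pos (hMpos (q + 1)) (hMpos q)
  have hrmono : Monotone r := by
    apply monotone_nat_of_le_succ
    intro q
    have h1 := hM1 (q + 1) (by omega)
    simp only [Nat.add_sub_cancel] at h1
    rw [hrdef]
    rw [div_le_div_iff₀ (hMpos q) (hMpos (q + 1))]
    calc M (q + 1) * M (q + 1) = (M (q + 1)) ^ 2 := by ring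
      _ ≤ M q * M (q + 1 + 1) := h1
      _ = M (q + 1 + 1) * M q := by ring
  have hmr : m = r (n - 1) := by
    show m = M (n - 1 + 1) / M (n - 1)
    rw [show n - 1 + 1 = n by omega]
  -- key multiplicative recursion
  have hstep : ∀ k, M (k + 1) = r k * M k := by
    intro k
    show M (k + 1) = M (k + 1) / M k * M k
    rw [div_mul_cancel₀ _ (hMpos k).ne']
  -- Lemma A: for d ≤ n, M n ≤ m ^ d * M (n - d)
  have hA : ∀ d, d ≤ n → M n ≤ m ^ d * M (n - d) := by
    intro d
    induction d with
    | zero => intro _; simp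
    | succ d ih =>
      intro hd
      have ih' := ih (by omega)
      have hkey : M (n - d) ≤ m * M (n - (d + 1)) := by
        have heq : n - d = (n - (d + 1)) + 1 := by omega
        rw [heq, hstep]
        have : r (n - (d + 1)) ≤ r (n - 1) := hrmono (by omega)
        rw [← hmr] at this
        exact mul_le_mul_of_nonneg_right this (hMpos _).le
      calc M n ≤ m ^ d * M (n - d) := ih'
        _ ≤ m ^ d * (m * M (n - (d + 1))) :=
          mul_le_mul_of_nonneg_left hkey (pow_nonneg hmpos.le d)
        _ = m ^ (d + 1) * M (n - (d + 1)) := by ring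
  -- Lemma B: m ^ d * M n ≤ M (n + d)
  have hB : ∀ d, m ^ d * M n ≤ M (n + d) := by
    intro d
    induction d with
    | zero => simp
    | succ d ih =>
      have hrle : m ≤ r (n + d) := by
        rw [hmr]; exact hrmono (by omega)
      calc m ^ (d + 1) * M n = m * (m ^ d * M n) := by ring
        _ ≤ m * M (n + d) := mul_le_mul_of_nonneg_left ih hmpos.le
        _ ≤ r (n + d) * M (n + d) := mul_le_mul_of_nonneg_right hrle (hMpos _).le
        _ = M (n + d + 1) := (hstep _).symm
  -- g p ≤ g n for all p
  have hgn : ∀ p, m ^ p / M p ≤ m ^ n / M n := by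
    intro p
    rw [div_le_div_iff₀ (hMpos p) (hMpos n)]
    rcases le_or_gt p n with hpn | hpn
    · have hAp := hA (n - p) (by omega)
      have hnp : n - (n - p) = p := by omega
      rw [hnp] at hAp
      calc m ^ p * M n ≤ m ^ p * (m ^ (n - p) * M p) :=
            mul_le_mul_of_nonneg_left hAp (pow_nonneg hmpos.le p)
        _ = m ^ (p + (n - p)) * M p := by ring
        _ = m ^ n * M p := by rw [show p + (n - p) = n by omega]
    · have hBp := hB (p - n)
      rw [show n + (p - n) = p by omega] at hBp
      calc m ^ p * M n = m ^ n * (m ^ (p - n) * M n) := by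
            rw [← mul_assoc, ← pow_add, show n + (p - n) = p by omega]
        _ ≤ m ^ n * M p := mul_le_mul_of_nonneg_left hBp (pow_nonneg hmpos.le n)
  -- bound: m ^ n / M n ≤ c0 * H ^ (2 * n)
  have hbound : m ^ n / M n ≤ c0 * H ^ (2 * n) := by
    have h2n := hM2 (2 * n) n (by omega)
    have h2n' : M (2 * n) ≤ c0 * H ^ (2 * n) * (M n * M n) := by
      rwa [show 2 * n - n = n by omega] at h2n
    have hBn := hB n
    rw [show n + n = 2 * n by omega] at hBn
    rw [div_le_iff₀ (hMpos n)]
    have : m ^ n * M n ≤ c0 * H ^ (2 * n) * (M n * M n) := hBn.trans h2n'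
    have hMn := hMpos n
    nlinarith [this, hMn]
  set f : ℕ → ℝ := fun p => max 0 (Real.log (m ^ p / M p)) with hfdef
  have hfn : ∀ p, f p ≤ f n := by
    intro p
    apply max_le_max le_rfl
    exact Real.log_le_log (div_pos (pow_pos hmpos p) (hMpos p)) (hgn p)
  have hbdd : BddAbove (Set.range f) := by
    refine ⟨f n, ?_⟩
    rintro x ⟨p, rfl⟩
    exact hfn p
  constructor
  · apply le_antisymm
    · apply ciSup_le
      intro p
      refine (hfn p).trans ?_
      exact le_ciSup (f := fun i : Fin (n + 1) => f (i : ℕ))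
        (Set.Finite.bddAbove (Set.finite_range _)) (⟨n, n.lt_succ_self⟩ : Fin (n + 1))
    · apply ciSup_le
      intro i
      exact le_ciSup hbdd (i : ℕ)
  · apply ciSup_le
    intro p
    have hB0 : 0 ≤ 2 * (n : ℝ) * Real.log H + Real.log c0 := by
      have h1 : 0 ≤ Real.log H := Real.log_nonneg hH
      have h2 : 0 ≤ Real.log c0 := Real.log_nonneg hc0
      positivity
    apply max_le hB0
    have hgp : m ^ p / M p ≤ c0 * H ^ (2 * n) := (hgn p).trans hbound
    calc Real.log (m ^ p / M p) ≤ Real.log (c0 * H ^ (2 * n)) :=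
          Real.log_le_log (div_pos (pow_pos hmpos p) (hMpos p)) hgp
      _ = Real.log c0 + (2 * n) * Real.log H := by
          rw [Real.log_mul (by positivity) (by positivity), Real.log_pow]
          push_cast; ring
      _ = 2 * n * Real.log H + Real.log c0 := by ring
end

section
/- Let M_p satisfy (M.1) with M_0 = 1, and let (t_p) be a sequence of positive reals monotonically increasing to infinity, with N_{t_p}(ρ) = sup_{p∈ℕ} log_+(ρ^p/(M_p ∏_{j=1}^p t_j)). Then for every k > 0 there exists ρ_0 > 0 such that N_{t_p}(ρ) ≤ M(kρ) for all ρ > ρ_0, where M is the associated function of M_p. -/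
open Finset Filter

theorem stmt7 (M : ℕ → ℝ) (hM0 : M 0 = 1) (hMpos : ∀ p, 0 < M p)
    (hM1 : ∀ p : ℕ, 1 ≤ p → (M p) ^ 2 ≤ M (p - 1) * M (p + 1))
    (hgrow : Tendsto (fun p : ℕ => (M p) ^ (1 / (p : ℝ))) atTop atTop)
    (t : ℕ → ℝ) (htpos : ∀ p, 0 < t p) (htmono : Monotone t)
    (httend : Tendsto t atTop atTop) :
    ∀ k : ℝ, 0 < k → ∃ ρ0 : ℝ, 0 < ρ0 ∧ ∀ ρ : ℝ, ρ0 < ρ → ∀ p : ℕ,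
      max 0 (Real.log (ρ ^ p / (M p * ∏ j ∈ Finset.Icc 1 p, t j))) ≤
        ⨆ q : ℕ, max 0 (Real.log ((k * ρ) ^ q / M q)) := by
  intro k hk
  -- positivity of the products
  have hprodpos : ∀ p : ℕ, (0:ℝ) < ∏ j ∈ Finset.Icc 1 p, t j := by
    intro p
    exact Finset.prod_pos fun j _ => htpos j
  -- Step 1: choose J with t j ≥ 2/k for all j ≥ J
  obtain ⟨J, hJ⟩ := (httend.eventually_ge_atTop (2 / k)).exists_forall_of_atTop
  -- Step 2: a lower bound constant
  have hne : (Finset.range (J + 1)).Nonempty := Finset.nonempty_range_add_one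
  set C : ℝ := min ((Finset.range (J + 1)).inf' hne
      (fun p => (k / 2) ^ p * ∏ j ∈ Finset.Icc 1 p, t j)) 1 with hC
  have hCpos : 0 < C := by
    apply lt_min _ one_pos
    rw [Finset.lt_inf'_iff]
    intro p _
    exact mul_pos (pow_pos (by positivity) p) (hprodpos p)
  have hC1 : C ≤ 1 := min_le_right _ _
  have hCle : ∀ p ∈ Finset.range (J + 1),
      C ≤ (k / 2) ^ p * ∏ j ∈ Finset.Icc 1 p, t j := by
    intro p hp
    exact le_trans (min_le_left _ _) (Finset.inf'_le _ hp)
  -- Lemma A: C * (2/k)^p ≤ ∏_{j=1}^p t j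
  have hA : ∀ p : ℕ, C * (2 / k) ^ p ≤ ∏ j ∈ Finset.Icc 1 p, t j := by
    intro p
    induction p with
    | zero => simpa using hC1
    | succ n ih =>
      by_cases hcase : n + 1 ≤ J
      · have := hCle (n + 1) (Finset.mem_range.mpr (by omega))
        calc C * (2 / k) ^ (n + 1)
            ≤ ((k / 2) ^ (n + 1) * ∏ j ∈ Finset.Icc 1 (n + 1), t j) * (2 / k) ^ (n + 1) := by
              apply mul_le_mul_of_nonneg_right this (by positivity)
          _ = ∏ j ∈ Finset.Icc 1 (n + 1), t j := by
              rw [mul_right_comm, ← mul_pow, div_mul_div_comm, mul_comm k 2, div_self (by positivity), one_pow, one_mul]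
      · have hge : J ≤ n + 1 := by omega
        have ht : 2 / k ≤ t (n + 1) := hJ (n + 1) hge
        rw [Finset.prod_Icc_succ_top (Nat.one_le_iff_ne_zero.mpr (Nat.succ_ne_zero n))]
        calc C * (2 / k) ^ (n + 1) = (C * (2 / k) ^ n) * (2 / k) := by ring
          _ ≤ (∏ j ∈ Finset.Icc 1 n, t j) * t (n + 1) := by
              apply mul_le_mul ih ht (by positivity)
              exact le_of_lt (hprodpos n)
  -- Step 3: choose p₁ with C * 2^p ≥ 1 for p ≥ p₁
  obtain ⟨p₁, hp₁⟩ : ∃ n : ℕ, 1 / C < 2 ^ n := pow_unbounded_of_one_lt (1 / C) one_lt_two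
  have hkprod : ∀ p : ℕ, p₁ ≤ p → (1:ℝ) ≤ k ^ p * ∏ j ∈ Finset.Icc 1 p, t j := by
    intro p hp
    have h2p : 1 / C < 2 ^ p := lt_of_lt_of_le hp₁ (pow_le_pow_right₀ one_le_two hp)
    have hCp : 1 ≤ C * 2 ^ p := by
      rw [div_lt_iff₀ hCpos] at h2p
      nlinarith
    calc (1:ℝ) ≤ C * 2 ^ p := hCp
      _ = k ^ p * (C * (2 / k) ^ p) := by
          rw [mul_left_comm, ← mul_pow, mul_div_assoc', mul_div_cancel_left₀ _ hk.ne']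
      _ ≤ k ^ p * ∏ j ∈ Finset.Icc 1 p, t j := by
          apply mul_le_mul_of_nonneg_left (hA p) (by positivity)
  -- Step 4: define ρ0
  set D : ℕ → ℝ := fun p => M p₁ / (k ^ p₁ * (M p * ∏ j ∈ Finset.Icc 1 p, t j)) with hD
  set ρ0 : ℝ := 1 + ∑ p ∈ Finset.range p₁, |D p| with hρ0
  have hρ0pos : 0 < ρ0 := by
    have : 0 ≤ ∑ p ∈ Finset.range p₁, |D p| :=
      Finset.sum_nonneg fun p _ => abs_nonneg _
    linarith
  have hρ0ge1 : 1 ≤ ρ0 := by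
    have : 0 ≤ ∑ p ∈ Finset.range p₁, |D p| :=
      Finset.sum_nonneg fun p _ => abs_nonneg _
    linarith
  have hρ0geD : ∀ p ∈ Finset.range p₁, D p ≤ ρ0 := by
    intro p hp
    have h1 : |D p| ≤ ∑ q ∈ Finset.range p₁, |D q| :=
      Finset.single_le_sum (fun q _ => abs_nonneg (D q)) hp
    calc D p ≤ |D p| := le_abs_self _
      _ ≤ ρ0 := by rw [hρ0]; linarith
  refine ⟨ρ0, hρ0pos, ?_⟩
  intro ρ hρ p
  have hρ1 : (1:ℝ) ≤ ρ := le_trans hρ0ge1 (le_of_lt hρ)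
  have hρpos : 0 < ρ := lt_of_lt_of_le one_pos hρ1
  have hkρ : 0 < k * ρ := mul_pos hk hρpos
  -- Step 5: boundedness of the sup
  obtain ⟨Q, hQ⟩ := (hgrow.eventually_ge_atTop (k * ρ)).exists_forall_of_atTop
  set f : ℕ → ℝ := fun q => max 0 (Real.log ((k * ρ) ^ q / M q)) with hf
  have hzero : ∀ q : ℕ, max Q 1 ≤ q → f q = 0 := by
    intro q hq
    have hq1 : 1 ≤ q := le_trans (le_max_right Q 1) hq
    have hle : k * ρ ≤ (M q) ^ (1 / (q : ℝ)) := hQ q (le_trans (le_max_left Q 1) hq)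
    have hMq : (k * ρ) ^ q ≤ M q := by
      have h1 : (k * ρ) ^ q ≤ ((M q) ^ (1 / (q : ℝ))) ^ q :=
        pow_le_pow_left₀ (le_of_lt hkρ) hle q
      have h2 : ((M q) ^ (1 / (q : ℝ))) ^ q = M q := by
        rw [← Real.rpow_natCast ((M q) ^ (1 / (q : ℝ))) q,
          ← Real.rpow_mul (le_of_lt (hMpos q)), one_div_mul_cancel, Real.rpow_one]
        exact_mod_cast Nat.one_le_iff_ne_zero.mp hq1
      rwa [h2] at h1
    have hrat : (k * ρ) ^ q / M q ≤ 1 := by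
      rw [div_le_one (hMpos q)]
      exact hMq
    have : Real.log ((k * ρ) ^ q / M q) ≤ 0 := Real.log_nonpos (div_nonneg (by positivity) (le_of_lt (hMpos q))) hrat
    simp [hf, max_eq_left this]
  have hbdd : BddAbove (Set.range f) := by
    have hsub : Set.range f ⊆ insert 0 (f '' Set.Iic (max Q 1)) := by
      rintro x ⟨q, rfl⟩
      by_cases hq : q ≤ max Q 1
      · exact Set.mem_insert_of_mem _ ⟨q, hq, rfl⟩
      · rw [hzero q (le_of_not_ge hq)]
        exact Set.mem_insert _ _
    exact BddAbove.mono hsub (((Set.finite_Iic (max Q 1)).image f).insert 0).bddAbove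
  have hsup0 : (0:ℝ) ≤ ⨆ q : ℕ, f q := by
    have := le_ciSup hbdd 0
    have hf0 : f 0 = 0 := by simp [hf, hM0]
    linarith [this, hf0.symm.le]
  by_cases hcase : p₁ ≤ p
  · -- large p: compare with same index
    have hX : ρ ^ p / (M p * ∏ j ∈ Finset.Icc 1 p, t j) ≤ (k * ρ) ^ p / M p := by
      rw [div_le_div_iff₀ (mul_pos (hMpos p) (hprodpos p)) (hMpos p), mul_pow]
      have h1 : (1:ℝ) ≤ k ^ p * ∏ j ∈ Finset.Icc 1 p, t j := hkprod p hcase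
      have h2 := mul_le_mul_of_nonneg_left h1
        (le_of_lt (mul_pos (pow_pos hρpos p) (hMpos p)))
      calc ρ ^ p * M p = (ρ ^ p * M p) * 1 := by ring
        _ ≤ (ρ ^ p * M p) * (k ^ p * ∏ j ∈ Finset.Icc 1 p, t j) := h2
        _ = k ^ p * ρ ^ p * (M p * ∏ j ∈ Finset.Icc 1 p, t j) := by ring
    calc max 0 (Real.log (ρ ^ p / (M p * ∏ j ∈ Finset.Icc 1 p, t j)))
        ≤ max 0 (Real.log ((k * ρ) ^ p / M p)) := by
          apply max_le_max le_rfl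
          exact Real.log_le_log (div_pos (pow_pos hρpos p) (mul_pos (hMpos p) (hprodpos p))) hX
      _ ≤ ⨆ q : ℕ, f q := le_ciSup hbdd p
  · -- small p: compare with index p₁
    push_neg at hcase
    have hDp : D p ≤ ρ0 := hρ0geD p (Finset.mem_range.mpr hcase)
    have hDρ : D p ≤ ρ := le_trans hDp (le_of_lt hρ)
    have hρpow : ρ ≤ ρ ^ (p₁ - p) := by
      calc ρ = ρ ^ 1 := (pow_one ρ).symm
        _ ≤ ρ ^ (p₁ - p) := pow_le_pow_right₀ hρ1 (by omega)
    have hX : ρ ^ p / (M p * ∏ j ∈ Finset.Icc 1 p, t j) ≤ (k * ρ) ^ p₁ / M p₁ := by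
      rw [div_le_div_iff₀ (mul_pos (hMpos p) (hprodpos p)) (hMpos p₁)]
      have hMP : M p₁ ≤ ρ * (k ^ p₁ * (M p * ∏ j ∈ Finset.Icc 1 p, t j)) := by
        rw [hD] at hDρ
        rw [div_le_iff₀ (mul_pos (pow_pos hk p₁) (mul_pos (hMpos p) (hprodpos p)))] at hDρ
        linarith [hDρ]
      have hsplit : (k * ρ) ^ p₁ = k ^ p₁ * (ρ ^ p * ρ ^ (p₁ - p)) := by
        have hpp : ρ ^ p * ρ ^ (p₁ - p) = ρ ^ p₁ := by
          rw [← pow_add]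
          congr 1
          omega
        rw [mul_pow, hpp]
      rw [hsplit]
      have h2 : ρ ^ p * ρ ≤ ρ ^ p * ρ ^ (p₁ - p) :=
        mul_le_mul_of_nonneg_left hρpow (le_of_lt (pow_pos hρpos p))
      calc ρ ^ p * M p₁ ≤ ρ ^ p * (ρ * (k ^ p₁ * (M p * ∏ j ∈ Finset.Icc 1 p, t j))) :=
            mul_le_mul_of_nonneg_left hMP (le_of_lt (pow_pos hρpos p))
        _ = (ρ ^ p * ρ) * (k ^ p₁ * (M p * ∏ j ∈ Finset.Icc 1 p, t j)) := by ring
        _ ≤ (ρ ^ p * ρ ^ (p₁ - p)) * (k ^ p₁ * (M p * ∏ j ∈ Finset.Icc 1 p, t j)) := by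
            exact mul_le_mul_of_nonneg_right h2
              (le_of_lt (mul_pos (pow_pos hk p₁) (mul_pos (hMpos p) (hprodpos p))))
        _ = k ^ p₁ * (ρ ^ p * ρ ^ (p₁ - p)) * (M p * ∏ j ∈ Finset.Icc 1 p, t j) := by ring
    apply max_le hsup0
    calc Real.log (ρ ^ p / (M p * ∏ j ∈ Finset.Icc 1 p, t j))
        ≤ Real.log ((k * ρ) ^ p₁ / M p₁) := Real.log_le_log (div_pos (pow_pos hρpos p) (mul_pos (hMpos p) (hprodpos p))) hX
      _ ≤ f p₁ := le_max_right _ _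
      _ ≤ ⨆ q : ℕ, f q := le_ciSup hbdd p₁
end

section
/- Define r_1 = 1 and r_p = p^{1 - 1/(2√(ln p))} for p ≥ 2, let R_p = ∏_{j=1}^p r_j, and set M_0 = 1, M_p = (p!)^2 R_p, A_p = (p!)^2. Then there do NOT exist constants C > 0 and L > 0 such that A_p ≤ C L^p M_p^{2/3} for all p ≥ 1; but for every λ > 2/3, there exist constants C > 0 and L > 0 such that A_p ≤ C L^p M_p^{λ} for all p ≥ 1. -/
open Finset Filter

theorem stmt8 (r : ℕ → ℝ) (hr1 : r 1 = 1)
    (hr : ∀ p : ℕ, 2 ≤ p → r p = (p : ℝ) ^ ((1 : ℝ) - 1 / (2 * Real.sqrt (Real.log p))))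
    (M A : ℕ → ℝ) (hM0 : M 0 = 1)
    (hM : ∀ p : ℕ, 1 ≤ p → M p = (Nat.factorial p : ℝ) ^ 2 * ∏ j ∈ Finset.Icc 1 p, r j)
    (hA : ∀ p : ℕ, A p = (Nat.factorial p : ℝ) ^ 2) :
    (¬ ∃ C L : ℝ, 0 < C ∧ 0 < L ∧
        ∀ p : ℕ, 1 ≤ p → A p ≤ C * L ^ p * (M p) ^ ((2 : ℝ) / 3)) ∧
      ∀ lam : ℝ, 2 / 3 < lam → ∃ C L : ℝ, 0 < C ∧ 0 < L ∧
        ∀ p : ℕ, 1 ≤ p → A p ≤ C * L ^ p * (M p) ^ lam := by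
  have hfac : ∀ p : ℕ, (0:ℝ) < (Nat.factorial p : ℝ) := fun p => by
    exact_mod_cast Nat.factorial_pos p
  set S : ℕ → ℝ := fun p => ∑ j ∈ Icc 1 p, Real.sqrt (Real.log j) with hSdef
  -- r j as an exponential
  have hrexp : ∀ j : ℕ, 1 ≤ j →
      r j = Real.exp (Real.log j - Real.sqrt (Real.log j) / 2) := by
    intro j hj
    rcases eq_or_lt_of_le hj with h1 | h2
    · rw [← h1]
      simp [hr1]
    · have hj2 : 2 ≤ j := h2
      have hj1R : (1:ℝ) < (j:ℝ) := by exact_mod_cast h2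
      have hlog : 0 < Real.log j := Real.log_pos hj1R
      have hsq : 0 < Real.sqrt (Real.log j) := Real.sqrt_pos.mpr hlog
      rw [hr j hj2, Real.rpow_def_of_pos (by positivity)]
      congr 1
      have key : ∀ s : ℝ, 0 < s → s ^ 2 * (1 - 1 / (2 * s)) = s ^ 2 - s / 2 := by
        intro s hs
        field_simp
      have h2' := key _ hsq
      rw [Real.sq_sqrt hlog.le] at h2'
      linarith [h2']
  -- sum of logs
  have hlogfac : ∀ p : ℕ, ∑ j ∈ Icc 1 p, Real.log j = Real.log (Nat.factorial p) := by
    intro p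
    rw [← Real.log_prod (fun j hj => by
      have : 1 ≤ j := (mem_Icc.mp hj).1
      have : (0:ℝ) < j := by exact_mod_cast this
      positivity)]
    congr 1
    rw [← Nat.cast_prod]
    congr 1
    rw [← Finset.Ico_add_one_right_eq_Icc]
    exact Finset.prod_Ico_id_eq_factorial p
  -- the product formula
  have hprod : ∀ p : ℕ, ∏ j ∈ Icc 1 p, r j
      = (Nat.factorial p : ℝ) * Real.exp (-(S p) / 2) := by
    intro p
    have h1 : ∏ j ∈ Icc 1 p, r j
        = Real.exp (∑ j ∈ Icc 1 p, (Real.log j - Real.sqrt (Real.log j) / 2)) := by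
      rw [Real.exp_sum]
      exact Finset.prod_congr rfl (fun j hj => hrexp j (mem_Icc.mp hj).1)
    have hSp : S p = ∑ j ∈ Icc 1 p, Real.sqrt (Real.log j) := rfl
    rw [h1, Finset.sum_sub_distrib, hlogfac p, ← Finset.sum_div, Real.exp_sub,
      Real.exp_log (hfac p), hSp, neg_div, Real.exp_neg, ← div_eq_mul_inv]
  have hMexp : ∀ p : ℕ, 1 ≤ p →
      M p = (Nat.factorial p : ℝ) ^ 3 * Real.exp (-(S p) / 2) := by
    intro p hp
    rw [hM p hp, hprod p]
    ring
  have hS0 : ∀ p : ℕ, 0 ≤ S p := by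
    intro p
    exact Finset.sum_nonneg fun j _ => Real.sqrt_nonneg _
  constructor
  · rintro ⟨C, L, hC, hL, hCL⟩
    -- derive S p ≤ 3 log C + 3 p log L for all p ≥ 1
    have key : ∀ p : ℕ, 1 ≤ p → S p ≤ 3 * Real.log C + 3 * p * Real.log L := by
      intro p hp
      have h := hCL p hp
      rw [hA, hMexp p hp] at h
      have hMlam : ((Nat.factorial p : ℝ) ^ 3 * Real.exp (-(S p) / 2)) ^ ((2:ℝ)/3)
          = (Nat.factorial p : ℝ) ^ 2 * Real.exp (-(S p) / 3) := by
        rw [Real.mul_rpow (by positivity) (Real.exp_pos _).le, ← Real.exp_mul]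
        congr 1
        · rw [← Real.rpow_natCast (Nat.factorial p : ℝ) 3, ← Real.rpow_mul (hfac p).le]
          rw [show ((3:ℕ):ℝ) * ((2:ℝ)/3) = ((2:ℕ):ℝ) by norm_num, Real.rpow_natCast]
        · congr 1
          ring
      rw [hMlam] at h
      have hF : (0:ℝ) < (Nat.factorial p : ℝ) ^ 2 := by positivity
      have h1 : 1 ≤ C * L ^ p * Real.exp (-(S p) / 3) := by
        nlinarith [h, hF, Real.exp_pos (-(S p) / 3), pow_pos hL p]
      have h2 : Real.exp (S p / 3) ≤ C * L ^ p := by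
        have h3 := mul_le_mul_of_nonneg_right h1 (Real.exp_nonneg (S p / 3))
        rw [one_mul, mul_assoc, ← Real.exp_add] at h3
        have : -(S p) / 3 + S p / 3 = 0 := by ring
        rw [this, Real.exp_zero, mul_one] at h3
        exact h3
      have h4 : S p / 3 ≤ Real.log (C * L ^ p) := by
        rw [← Real.log_exp (S p / 3)]
        exact (Real.log_le_log_iff (Real.exp_pos _) (by positivity)).mpr h2
      rw [Real.log_mul hC.ne' (by positivity), Real.log_pow] at h4
      linarith
    -- choose parameters for the contradiction
    set a : ℝ := max (3 * Real.log L) 0 + 1 with ha_def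
    have ha1 : 1 ≤ a := by
      have := le_max_right (3 * Real.log L) 0
      simp only [ha_def]
      linarith
    have haL : 3 * Real.log L ≤ a - 1 := by
      have := le_max_left (3 * Real.log L) 0
      simp only [ha_def]
      linarith
    set N : ℕ := ⌈Real.exp (a ^ 2)⌉₊ with hN_def
    have hN1 : 1 ≤ N := Nat.one_le_iff_ne_zero.mpr (by
      have : 0 < N := Nat.ceil_pos.mpr (Real.exp_pos _)
      omega)
    have hNa : a ≤ Real.sqrt (Real.log N) := by
      have h1 : Real.exp (a ^ 2) ≤ (N:ℝ) := Nat.le_ceil _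
      have h2 : a ^ 2 ≤ Real.log N := by
        rw [← Real.log_exp (a ^ 2)]
        exact (Real.log_le_log_iff (Real.exp_pos _)
          (lt_of_lt_of_le (Real.exp_pos _) h1)).mpr h1
      calc a = Real.sqrt (a ^ 2) := (Real.sqrt_sq (by linarith)).symm
        _ ≤ Real.sqrt (Real.log N) := Real.sqrt_le_sqrt h2
    set p : ℕ := N + ⌈3 * Real.log C + (N:ℝ) * a⌉₊ + 1 with hp_def
    have hpN : N ≤ p := by omega
    have hp1 : 1 ≤ p := le_trans hN1 hpN
    -- lower bound on S p
    have hlow : ((p:ℝ) + 1 - (N:ℝ)) * a ≤ S p := by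
      have hsub : Icc N p ⊆ Icc 1 p := Finset.Icc_subset_Icc_left hN1
      have h1 : ∑ j ∈ Icc N p, a ≤ ∑ j ∈ Icc N p, Real.sqrt (Real.log j) := by
        apply Finset.sum_le_sum
        intro j hj
        have hNj : N ≤ j := (mem_Icc.mp hj).1
        calc a ≤ Real.sqrt (Real.log N) := hNa
          _ ≤ Real.sqrt (Real.log j) := by
            apply Real.sqrt_le_sqrt
            apply Real.log_le_log (by exact_mod_cast hN1)
            exact_mod_cast hNj
      have h2 : ∑ j ∈ Icc N p, Real.sqrt (Real.log j) ≤ S p := by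
        apply Finset.sum_le_sum_of_subset_of_nonneg hsub
        intro j _ _
        exact Real.sqrt_nonneg _
      rw [Finset.sum_const, Nat.card_Icc, nsmul_eq_mul] at h1
      have hcast : ((p + 1 - N : ℕ) : ℝ) = (p:ℝ) + 1 - (N:ℝ) := by
        have : N ≤ p + 1 := by omega
        push_cast [Nat.cast_sub this]
        ring
      rw [hcast] at h1
      linarith
    have hup := key p hp1
    have hup2 : 3 * (p:ℝ) * Real.log L ≤ (p:ℝ) * (a - 1) := by
      have hp0 : (0:ℝ) ≤ p := Nat.cast_nonneg p
      nlinarith [haL]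
    have hceil : 3 * Real.log C + (N:ℝ) * a ≤ (⌈3 * Real.log C + (N:ℝ) * a⌉₊ : ℝ) :=
      Nat.le_ceil _
    have hpcast : (p:ℝ) = (N:ℝ) + (⌈3 * Real.log C + (N:ℝ) * a⌉₊ : ℝ) + 1 := by
      rw [hp_def]
      push_cast
      ring
    have hNcast : (1:ℝ) ≤ (N:ℝ) := by exact_mod_cast hN1
    nlinarith [hlow, hup, hup2, hceil, hpcast, hNcast, ha1]
  · intro lam hlam
    set ε : ℝ := 3 * lam - 2 with hε
    clear_value ε
    have hεpos : 0 < ε := by rw [hε]; linarith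
    have hlam0 : 0 < lam := by linarith
    refine ⟨1, Real.exp (lam ^ 2 / (16 * ε)), one_pos, Real.exp_pos _, ?_⟩
    intro p hp
    rw [hA, hMexp p hp, one_mul]
    have hMlam : ((Nat.factorial p : ℝ) ^ 3 * Real.exp (-(S p) / 2)) ^ lam
        = (Nat.factorial p : ℝ) ^ ((3:ℝ) * lam) * Real.exp (-(S p) / 2 * lam) := by
      rw [Real.mul_rpow (by positivity) (Real.exp_pos _).le, ← Real.exp_mul]
      congr 1
      rw [← Real.rpow_natCast (Nat.factorial p : ℝ) 3, ← Real.rpow_mul (hfac p).le]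
      norm_num
    rw [hMlam]
    -- termwise estimate
    have hterm : ∀ j ∈ Icc 1 p, lam / 2 * Real.sqrt (Real.log j)
        ≤ lam ^ 2 / (16 * ε) + ε * Real.log j := by
      intro j hj
      have hj1 : 1 ≤ j := (mem_Icc.mp hj).1
      have hj1R : (1:ℝ) ≤ (j:ℝ) := by exact_mod_cast hj1
      have hlj : 0 ≤ Real.log j := Real.log_nonneg hj1R
      have ht := Real.sq_sqrt hlj
      set t := Real.sqrt (Real.log j) with htdef
      have ht0 : 0 ≤ t := Real.sqrt_nonneg _
      clear_value t
      rw [← ht, ← mul_le_mul_iff_right₀ (show (0:ℝ) < 16 * ε by linarith)]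
      have expand : 16 * ε * (lam ^ 2 / (16 * ε) + ε * t ^ 2)
          = lam ^ 2 + 16 * ε ^ 2 * t ^ 2 := by
        field_simp
      rw [expand]
      nlinarith [sq_nonneg (4 * ε * t - lam)]
    have hsum : lam / 2 * S p
        ≤ (p:ℝ) * (lam ^ 2 / (16 * ε)) + ε * Real.log (Nat.factorial p) := by
      have h1 := Finset.sum_le_sum hterm
      rw [Finset.sum_add_distrib, Finset.sum_const, ← Finset.mul_sum, ← Finset.mul_sum,
        Nat.card_Icc, hlogfac p, nsmul_eq_mul] at h1
      have : ((p + 1 - 1 : ℕ) : ℝ) = (p:ℝ) := by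
        norm_num
      rw [this] at h1
      exact h1
    have key : (1:ℝ) ≤ Real.exp ((p:ℝ) * (lam ^ 2 / (16 * ε))
        + ε * Real.log (Nat.factorial p) - lam / 2 * S p) :=
      Real.one_le_exp (by linarith)
    have hrw : Real.exp (lam ^ 2 / (16 * ε)) ^ p
          * ((Nat.factorial p : ℝ) ^ ((3:ℝ) * lam) * Real.exp (-(S p) / 2 * lam))
        = (Nat.factorial p : ℝ) ^ 2
          * Real.exp ((p:ℝ) * (lam ^ 2 / (16 * ε))
            + ε * Real.log (Nat.factorial p) - lam / 2 * S p) := by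
      rw [← Real.exp_nat_mul, Real.rpow_def_of_pos (hfac p), ← Real.exp_add, ← Real.exp_add]
      have hfac2 : ((Nat.factorial p : ℝ)) ^ 2 = Real.exp (2 * Real.log (Nat.factorial p)) := by
        rw [show (2:ℝ) * Real.log (Nat.factorial p)
          = Real.log (Nat.factorial p) * 2 by ring]
        rw [Real.exp_mul, Real.exp_log (hfac p)]
        norm_num
      rw [hfac2, ← Real.exp_add]
      congr 1
      rw [hε]
      ring
    rw [hrw]
    have hF : (0:ℝ) < (Nat.factorial p : ℝ) ^ 2 := by positivity
    nlinarith [key, hF]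
end

section
/- With r_p and R_p as defined (r_1 = 1, r_p = p^{1-1/(2√(ln p))} for p ≥ 2, R_p = ∏_{j=1}^p r_j), the sequence M_p = (p!)^2 R_p with M_0 = 1 satisfies condition (M.1): M_p^2 ≤ M_{p-1} M_{p+1} for all p ≥ 1. -/
open Finset Filter

theorem stmt9 (r : ℕ → ℝ) (hr1 : r 1 = 1)
    (hr : ∀ p : ℕ, 2 ≤ p → r p = (p : ℝ) ^ ((1 : ℝ) - 1 / (2 * Real.sqrt (Real.log p))))
    (M : ℕ → ℝ) (hM0 : M 0 = 1)
    (hM : ∀ p : ℕ, 1 ≤ p → M p = (Nat.factorial p : ℝ) ^ 2 * ∏ j ∈ Finset.Icc 1 p, r j) :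
    ∀ p : ℕ, 1 ≤ p → (M p) ^ 2 ≤ M (p - 1) * M (p + 1) := by
  have rpos : ∀ j : ℕ, 1 ≤ j → 0 < r j := by
    intro j hj
    rcases eq_or_lt_of_le hj with h | h
    · rw [← h, hr1]; norm_num
    · rw [hr j h]
      exact Real.rpow_pos_of_pos (by exact_mod_cast Nat.lt_of_lt_of_le Nat.zero_lt_one hj) _
  have Mpos : ∀ p : ℕ, 0 < M p := by
    intro p
    rcases Nat.eq_zero_or_pos p with h | h
    · rw [h, hM0]; norm_num
    · rw [hM p h]
      apply mul_pos (by positivity)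
      exact Finset.prod_pos fun j hj => rpos j (Finset.mem_Icc.mp hj).1
  have step : ∀ q : ℕ, M (q + 1) = M q * (((q : ℝ) + 1) ^ 2 * r (q + 1)) := by
    intro q
    rcases Nat.eq_zero_or_pos q with h | h
    · subst h
      rw [hM 1 le_rfl, hM0]
      simp [Nat.factorial]
    · rw [hM (q + 1) (by omega), hM q h,
        Finset.prod_Icc_succ_top (by omega : 1 ≤ q + 1), Nat.factorial_succ]
      push_cast
      ring
  have sqrt_log_pos : ∀ q : ℕ, 2 ≤ q → (1 : ℝ) / 2 < Real.sqrt (Real.log q) := by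
    intro q hq
    have h2 : (2 : ℝ) ≤ (q : ℝ) := by exact_mod_cast hq
    have hlog : Real.log 2 ≤ Real.log q := Real.log_le_log (by norm_num) h2
    have h2' : (0.6931471803 : ℝ) < Real.log 2 := Real.log_two_gt_d9
    have : (1 : ℝ) / 4 < Real.log q := by linarith
    calc (1 : ℝ) / 2 = Real.sqrt (1 / 4) := by
          rw [show (1 : ℝ) / 4 = (1 / 2) ^ 2 by norm_num, Real.sqrt_sq (by norm_num)]
      _ < Real.sqrt (Real.log q) := Real.sqrt_lt_sqrt (by norm_num) this
  have key : ∀ q : ℕ, 1 ≤ q → ((q : ℝ)) ^ 2 * r q ≤ ((q : ℝ) + 1) ^ 2 * r (q + 1) := by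
    intro q hq
    rcases eq_or_lt_of_le hq with h | h
    · -- q = 1
      subst h
      rw [hr1, hr 2 le_rfl]
      have hs := sqrt_log_pos 2 le_rfl
      push_cast at hs ⊢
      have he : (0 : ℝ) ≤ 1 - 1 / (2 * Real.sqrt (Real.log 2)) := by
        have : 1 / (2 * Real.sqrt (Real.log 2)) ≤ 1 :=
          (div_le_one (by linarith)).mpr (by linarith)
        linarith
      have h1 : (1 : ℝ) ≤ (2 : ℝ) ^ (1 - 1 / (2 * Real.sqrt (Real.log 2))) :=
        Real.one_le_rpow (by norm_num) he
      nlinarith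
    · have hq2 : 2 ≤ q := h
      have hq3 : 2 ≤ q + 1 := by omega
      rw [hr q hq2, hr (q + 1) hq3]
      push_cast
      set x : ℝ := (q : ℝ) with hx
      have hx2 : (2 : ℝ) ≤ x := by rw [hx]; exact_mod_cast hq2
      have hs1 : (1 : ℝ) / 2 < Real.sqrt (Real.log q) := sqrt_log_pos q hq2
      have hs2 : (1 : ℝ) / 2 < Real.sqrt (Real.log (q + 1 : ℕ)) := sqrt_log_pos (q + 1) hq3
      have hcast : ((q + 1 : ℕ) : ℝ) = x + 1 := by push_cast; ring
      rw [hcast] at hs2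
      set a : ℝ := (1 : ℝ) - 1 / (2 * Real.sqrt (Real.log x)) with ha
      set b : ℝ := (1 : ℝ) - 1 / (2 * Real.sqrt (Real.log (x + 1))) with hb
      have hxpos : (0 : ℝ) < x := by linarith
      have hx1pos : (0 : ℝ) < x + 1 := by linarith
      have hsq : x ^ 2 = x ^ ((2 : ℝ) : ℝ) := by
        rw [← Real.rpow_natCast x 2]; norm_num
      have hsq' : (x + 1) ^ 2 = (x + 1) ^ ((2 : ℝ) : ℝ) := by
        rw [← Real.rpow_natCast (x + 1) 2]; norm_num
      rw [hsq, hsq', ← Real.rpow_add hxpos, ← Real.rpow_add hx1pos]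
      have hab : a ≤ b := by
        have hmono : Real.sqrt (Real.log x) ≤ Real.sqrt (Real.log (x + 1)) :=
          Real.sqrt_le_sqrt (Real.log_le_log (by linarith) (by linarith))
        have : 1 / (2 * Real.sqrt (Real.log (x + 1))) ≤ 1 / (2 * Real.sqrt (Real.log x)) :=
          one_div_le_one_div_of_le (by linarith) (by linarith)
        simp only [ha, hb]; linarith
      have h2a : (0 : ℝ) ≤ 2 + a := by
        have : 1 / (2 * Real.sqrt (Real.log x)) ≤ 1 :=
          (div_le_one (by linarith)).mpr (by linarith)
        simp only [ha]; linarith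
      calc x ^ ((2 : ℝ) + a) ≤ (x + 1) ^ ((2 : ℝ) + a) :=
            Real.rpow_le_rpow (le_of_lt hxpos) (by linarith) h2a
        _ ≤ (x + 1) ^ ((2 : ℝ) + b) :=
            Real.rpow_le_rpow_of_exponent_le (by linarith) (by linarith)
  intro p hp
  obtain ⟨q, rfl⟩ : ∃ q, p = q + 1 := ⟨p - 1, by omega⟩
  have h1 := step q
  have h2 := step (q + 1)
  have hk := key (q + 1) (by omega)
  have hMq := Mpos q
  have hc1 : 0 < ((q : ℝ) + 1) ^ 2 * r (q + 1) :=
    mul_pos (by positivity) (rpos (q + 1) (by omega))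
  simp only [Nat.add_sub_cancel]
  push_cast at hk h2 ⊢
  rw [h1, h2, h1]
  nlinarith [sq_nonneg (M q), mul_pos hMq hc1]
end

section
/- Let g: [0,∞) → [0,∞) be an increasing function such that for every L > 0 there exists C > 0 with g(ρ) ≤ M(Lρ) + ln C for all ρ ≥ 0, where M is the associated function of a sequence M_p satisfying (M.1) with M_0 = 1 and M_p^{1/p} → ∞. Then there exists a subordinate function ε(ρ) (i.e., ε: [0,∞) → [0,∞) increasing, ε(ρ) → ∞ as ρ → ∞, and ε(ρ)/ρ → 0 as ρ → ∞) and a constant C' > 1 such that g(ρ) ≤ M(ε(ρ)) + ln C' for all ρ ≥ 0. -/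
open Filter

private lemma max0log_mono {x y : ℝ} (hx : 0 ≤ x) (hxy : x ≤ y) :
    max 0 (Real.log x) ≤ max 0 (Real.log y) := by
  rcases le_or_gt x 1 with h | h
  · have : Real.log x ≤ 0 := Real.log_nonpos hx h
    calc max 0 (Real.log x) = 0 := max_eq_left this
    _ ≤ max 0 (Real.log y) := le_max_left _ _
  · exact max_le_max le_rfl (Real.log_le_log (lt_trans one_pos h) hxy)

private lemma bddAbove_aux (M : ℕ → ℝ) (hMpos : ∀ p, 0 < M p)
    (hgrow : Tendsto (fun p : ℕ => (M p) ^ (1 / (p : ℝ))) atTop atTop)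
    (σ : ℝ) (hσ : 0 ≤ σ) :
    BddAbove (Set.range fun p : ℕ => max 0 (Real.log (σ ^ p / M p))) := by
  set f : ℕ → ℝ := fun p : ℕ => max 0 (Real.log (σ ^ p / M p)) with hf
  obtain ⟨N, hN⟩ := (hgrow.eventually_ge_atTop (σ + 1)).exists_forall_of_atTop
  set N' := max N 1 with hN'
  refine ⟨(Finset.range (N' + 1)).sup' (by simp) f, ?_⟩
  rintro _ ⟨p, rfl⟩
  rcases le_or_gt p N' with hp | hp
  · exact Finset.le_sup' f (Finset.mem_range.2 (by omega))
  · -- for p > N', the term is ≤ 0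
    have hp1 : 1 ≤ p := le_trans (le_max_right N 1) hp.le
    have hpN : N ≤ p := le_trans (le_max_left N 1) hp.le
    have hr : σ + 1 ≤ (M p) ^ (1 / (p : ℝ)) := hN p hpN
    have hpne : (p : ℝ) ≠ 0 := Nat.cast_ne_zero.2 (by omega)
    have hrp : ((M p) ^ (1 / (p : ℝ))) ^ (p : ℕ) = M p := by
      rw [← Real.rpow_natCast ((M p) ^ (1 / (p : ℝ))) p, ← Real.rpow_mul (hMpos p).le,
        one_div_mul_cancel hpne, Real.rpow_one]
    have h1 : σ ^ p ≤ M p := by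
      calc σ ^ p ≤ (σ + 1) ^ p := pow_le_pow_left₀ hσ (by linarith) p
      _ ≤ ((M p) ^ (1 / (p : ℝ))) ^ (p : ℕ) := pow_le_pow_left₀ (by linarith) hr p
      _ = M p := hrp
    have h2 : σ ^ p / M p ≤ 1 := (div_le_one (hMpos p)).2 h1
    have h3 : f p ≤ 0 := max_le le_rfl
      (Real.log_nonpos (div_nonneg (pow_nonneg hσ p) (hMpos p).le) h2)
    calc f p ≤ 0 := h3
    _ ≤ f 0 := le_max_left _ _
    _ ≤ _ := Finset.le_sup' f (Finset.mem_range.2 (by omega))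

private lemma doubling_aux (M : ℕ → ℝ) (hM0 : M 0 = 1) (hMpos : ∀ p, 0 < M p)
    (hgrow : Tendsto (fun p : ℕ => (M p) ^ (1 / (p : ℝ))) atTop atTop) (c : ℝ) :
    ∃ σ₀ : ℝ, 1 ≤ σ₀ ∧ ∀ σ : ℝ, σ₀ ≤ σ →
      (⨆ p : ℕ, max 0 (Real.log (σ ^ p / M p))) + c
        ≤ ⨆ p : ℕ, max 0 (Real.log ((2 * σ) ^ p / M p)) := by
  have hlog2 : 0 < Real.log 2 := Real.log_pos (by norm_num)
  obtain ⟨n, hn⟩ := exists_nat_ge (c / Real.log 2)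
  set p := max n 1 with hp
  have hp1 : 1 ≤ p := le_max_right n 1
  have hcp : c ≤ (p : ℝ) * Real.log 2 := by
    have hnp : (n : ℝ) ≤ (p : ℝ) := Nat.cast_le.2 (le_max_left n 1)
    have := (div_le_iff₀ hlog2).1 hn
    nlinarith [hlog2.le]
  set B := (Finset.range p).sup' (Finset.nonempty_range_iff.2 (by omega)) (fun q => 1 / M q) with hB
  refine ⟨max 1 (M p * B), le_max_left _ _, ?_⟩
  intro σ hσ
  have h1σ : 1 ≤ σ := le_trans (le_max_left _ _) hσ
  have hσpos : 0 < σ := lt_of_lt_of_le one_pos h1σ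
  -- for q < p : M p / M q ≤ σ
  have hq : ∀ q < p, M p / M q ≤ σ := by
    intro q hqp
    have hBq : 1 / M q ≤ B := by
      rw [hB]
      exact Finset.le_sup' (fun r => 1 / M r) (Finset.mem_range.2 hqp)
    calc M p / M q = M p * (1 / M q) := by ring
    _ ≤ M p * B := mul_le_mul_of_nonneg_left hBq (hMpos p).le
    _ ≤ max 1 (M p * B) := le_max_right _ _
    _ ≤ σ := hσ
  have hMpσ : M p ≤ σ := by
    have := hq 0 (by omega)
    rwa [hM0, div_one] at this
  have htp0 : 0 ≤ Real.log (σ ^ p / M p) := by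
    apply Real.log_nonneg
    rw [le_div_iff₀ (hMpos p), one_mul]
    calc M p ≤ σ := hMpσ
    _ ≤ σ ^ p := le_self_pow₀ h1σ (by omega)
  -- identity: log((2σ)^q/M q) = q log 2 + log(σ^q/M q)
  have hid : ∀ q : ℕ, Real.log ((2 * σ) ^ q / M q)
      = (q : ℝ) * Real.log 2 + Real.log (σ ^ q / M q) := by
    intro q
    rw [mul_pow, mul_div_assoc, Real.log_mul (by positivity)
      (by
        have := hMpos q
        positivity), Real.log_pow]
  have hbdd2 := bddAbove_aux M hMpos hgrow (2 * σ) (by linarith)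
  have hle2 : ∀ q : ℕ, max 0 (Real.log ((2 * σ) ^ q / M q))
      ≤ ⨆ r : ℕ, max 0 (Real.log ((2 * σ) ^ r / M r)) := fun q => le_ciSup hbdd2 q
  rw [← le_sub_iff_add_le]
  apply ciSup_le
  intro q
  rw [le_sub_iff_add_le]
  rcases lt_or_ge q p with hqp | hpq
  · -- q < p
    have htq : Real.log (σ ^ q / M q) ≤ Real.log (σ ^ p / M p) := by
      apply Real.log_le_log (div_pos (pow_pos hσpos q) (hMpos q))
      rw [div_le_div_iff₀ (hMpos q) (hMpos p)]
      have h1 : M p ≤ σ * M q := (div_le_iff₀ (hMpos q)).1 (hq q hqp)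
      calc σ ^ q * M p ≤ σ ^ q * (σ * M q) :=
        mul_le_mul_of_nonneg_left h1 (by positivity)
      _ = σ ^ (q + 1) * M q := by ring
      _ ≤ σ ^ p * M q := by
          apply mul_le_mul_of_nonneg_right _ (hMpos q).le
          exact pow_le_pow_right₀ h1σ (by omega)
    calc max 0 (Real.log (σ ^ q / M q)) + c ≤ Real.log (σ ^ p / M p) + c :=
      add_le_add_left (max_le htp0 htq) c
    _ ≤ Real.log (σ ^ p / M p) + (p : ℝ) * Real.log 2 := add_le_add_right hcp _
    _ = Real.log ((2 * σ) ^ p / M p) := by rw [hid p]; ring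
    _ ≤ max 0 (Real.log ((2 * σ) ^ p / M p)) := le_max_right _ _
    _ ≤ _ := hle2 p
  · -- p ≤ q
    have hcq : c ≤ (q : ℝ) * Real.log 2 := by
      calc c ≤ (p : ℝ) * Real.log 2 := hcp
      _ ≤ (q : ℝ) * Real.log 2 :=
        mul_le_mul_of_nonneg_right (Nat.cast_le.2 hpq) hlog2.le
    have h1 : c ≤ Real.log ((2 * σ) ^ p / M p) := by
      rw [hid p]; linarith
    have h2 : Real.log (σ ^ q / M q) + c ≤ Real.log ((2 * σ) ^ q / M q) := by
      rw [hid q]; linarith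
    rw [max_comm, ← max_add_add_right]
    apply max_le
    · exact le_trans h2 (le_trans (le_max_right _ _) (hle2 q))
    · rw [zero_add]
      exact le_trans h1 (le_trans (le_max_right _ _) (hle2 p))

theorem stmt15 (M : ℕ → ℝ) (hM0 : M 0 = 1) (hMpos : ∀ p, 0 < M p)
    (hM1 : ∀ p : ℕ, 1 ≤ p → (M p) ^ 2 ≤ M (p - 1) * M (p + 1))
    (hgrow : Tendsto (fun p : ℕ => (M p) ^ (1 / (p : ℝ))) atTop atTop)
    (g : ℝ → ℝ) (hg0 : ∀ ρ : ℝ, 0 ≤ ρ → 0 ≤ g ρ)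
    (hgmono : ∀ a b : ℝ, 0 ≤ a → a ≤ b → g a ≤ g b)
    (hbound : ∀ L : ℝ, 0 < L → ∃ C : ℝ, 0 < C ∧ ∀ ρ : ℝ, 0 ≤ ρ →
      g ρ ≤ (⨆ p : ℕ, max 0 (Real.log ((L * ρ) ^ p / M p))) + Real.log C) :
    ∃ ε : ℝ → ℝ, (∀ ρ : ℝ, 0 ≤ ρ → 0 ≤ ε ρ) ∧
      (∀ a b : ℝ, 0 ≤ a → a ≤ b → ε a ≤ ε b) ∧
      Tendsto ε atTop atTop ∧
      Tendsto (fun ρ => ε ρ / ρ) atTop (nhds 0) ∧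
      ∃ C' : ℝ, 1 < C' ∧ ∀ ρ : ℝ, 0 ≤ ρ →
        g ρ ≤ (⨆ p : ℕ, max 0 (Real.log ((ε ρ) ^ p / M p))) + Real.log C' := by
  set F : ℝ → ℝ := fun σ => ⨆ p : ℕ, max 0 (Real.log (σ ^ p / M p)) with hF
  have hFmono : ∀ a b : ℝ, 0 ≤ a → a ≤ b → F a ≤ F b := by
    intro a b ha hab
    apply ciSup_le
    intro q
    refine le_trans (max0log_mono (div_nonneg (pow_nonneg ha q) (hMpos q).le) ?_)
      (le_ciSup (bddAbove_aux M hMpos hgrow b (le_trans ha hab)) q)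
    exact (div_le_div_iff_of_pos_right (hMpos q)).2 (pow_le_pow_left₀ ha hab q)
  have hFnonneg : ∀ σ : ℝ, 0 ≤ σ → 0 ≤ F σ := by
    intro σ hσ
    exact le_trans (le_max_left 0 _) (le_ciSup (bddAbove_aux M hMpos hgrow σ hσ) 0)
  set S : ℝ → Set ℝ := fun ρ => {σ : ℝ | 0 ≤ σ ∧ g ρ ≤ F σ} with hS
  have hSbdd : ∀ ρ, BddBelow (S ρ) := fun ρ => ⟨0, fun σ hσ => hσ.1⟩
  have hSne : ∀ ρ, (S ρ).Nonempty := by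
    intro ρ
    have hMe : 0 < M 1 * Real.exp (g ρ) := mul_pos (hMpos 1) (Real.exp_pos _)
    refine ⟨M 1 * Real.exp (g ρ), hMe.le, ?_⟩
    have h1 : Real.log ((M 1 * Real.exp (g ρ)) ^ 1 / M 1) = g ρ := by
      rw [pow_one, mul_comm, mul_div_assoc, div_self (hMpos 1).ne', mul_one, Real.log_exp]
    calc g ρ = Real.log ((M 1 * Real.exp (g ρ)) ^ 1 / M 1) := h1.symm
    _ ≤ max 0 (Real.log ((M 1 * Real.exp (g ρ)) ^ 1 / M 1)) := le_max_right _ _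
    _ ≤ F (M 1 * Real.exp (g ρ)) :=
      le_ciSup (bddAbove_aux M hMpos hgrow _ hMe.le) 1
  set e : ℝ → ℝ := fun ρ => sInf (S ρ) with he
  have he_nonneg : ∀ ρ, 0 ≤ e ρ := fun ρ => le_csInf (hSne ρ) (fun σ hσ => hσ.1)
  have he_mono : ∀ a b : ℝ, 0 ≤ a → a ≤ b → e a ≤ e b := by
    intro a b ha hab
    exact csInf_le_csInf (hSbdd a) (hSne b)
      (fun σ hσ => ⟨hσ.1, le_trans (hgmono a b ha hab) hσ.2⟩)
  refine ⟨fun ρ => 2 * e ρ + Real.sqrt ρ, ?_, ?_, ?_, ?_, ?_⟩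
  · intro ρ hρ
    show 0 ≤ 2 * e ρ + Real.sqrt ρ
    have := he_nonneg ρ
    have := Real.sqrt_nonneg ρ
    linarith
  · intro a b ha hab
    show 2 * e a + Real.sqrt a ≤ 2 * e b + Real.sqrt b
    have h1 := he_mono a b ha hab
    have h2 := Real.sqrt_le_sqrt hab
    linarith
  · -- Tendsto ε atTop atTop
    have hsq : Tendsto Real.sqrt atTop atTop := by
      apply tendsto_atTop_atTop.2
      intro b
      refine ⟨max 0 b ^ 2, fun a ha => ?_⟩
      have ha0 : (0 : ℝ) ≤ a := le_trans (by positivity) ha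
      exact le_trans (le_max_right 0 b) ((Real.le_sqrt (le_max_left 0 b) ha0).2 ha)
    apply tendsto_atTop_mono _ hsq
    intro ρ
    have := he_nonneg ρ
    linarith
  · -- Tendsto ε/ρ → 0
    have hA : ∀ δ : ℝ, 0 < δ → ∀ᶠ ρ in atTop, e ρ ≤ δ * ρ := by
      intro δ hδ
      obtain ⟨C, hC, hCb⟩ := hbound (δ / 2) (by positivity)
      obtain ⟨σ₀, hσ₀1, hdb⟩ := doubling_aux M hM0 hMpos hgrow (Real.log C)
      filter_upwards [eventually_ge_atTop (2 * σ₀ / δ), eventually_ge_atTop (0 : ℝ)]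
        with ρ h1 h2
      have hσ : σ₀ ≤ δ / 2 * ρ := by
        have := (div_le_iff₀ hδ).1 h1
        linarith
      have hkey : g ρ ≤ F (δ * ρ) := by
        calc g ρ ≤ F (δ / 2 * ρ) + Real.log C := hCb ρ h2
        _ ≤ F (2 * (δ / 2 * ρ)) := hdb _ hσ
        _ = F (δ * ρ) := by rw [show 2 * (δ / 2 * ρ) = δ * ρ by ring]
      exact csInf_le (hSbdd ρ) ⟨by positivity, hkey⟩
    have he0 : Tendsto (fun ρ => e ρ / ρ) atTop (nhds 0) := by
      rw [Metric.tendsto_nhds]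
      intro δ hδ
      filter_upwards [hA (δ / 2) (by positivity), eventually_ge_atTop (1 : ℝ)]
        with ρ h1 h2
      have hρpos : (0 : ℝ) < ρ := lt_of_lt_of_le one_pos h2
      have hnn : 0 ≤ e ρ / ρ := div_nonneg (he_nonneg ρ) hρpos.le
      have hub : e ρ / ρ ≤ δ / 2 := by
        rw [div_le_iff₀ hρpos]
        linarith [h1]
      rw [Real.dist_eq, sub_zero, abs_of_nonneg hnn]
      linarith
    have hsq0 : Tendsto (fun ρ : ℝ => Real.sqrt ρ / ρ) atTop (nhds 0) := by
      have hsq : Tendsto Real.sqrt atTop atTop := by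
        apply tendsto_atTop_atTop.2
        intro b
        refine ⟨max 0 b ^ 2, fun a ha => ?_⟩
        have ha0 : (0 : ℝ) ≤ a := le_trans (by positivity) ha
        exact le_trans (le_max_right 0 b) ((Real.le_sqrt (le_max_left 0 b) ha0).2 ha)
      have hinv : Tendsto (fun ρ : ℝ => (Real.sqrt ρ)⁻¹) atTop (nhds 0) :=
        hsq.inv_tendsto_atTop
      apply hinv.congr'
      filter_upwards [eventually_gt_atTop (0 : ℝ)] with ρ hρ
      have hsρ : (0 : ℝ) < Real.sqrt ρ := Real.sqrt_pos.2 hρ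
      rw [inv_eq_one_div, div_eq_div_iff hsρ.ne' hρ.ne', one_mul, Real.mul_self_sqrt hρ.le]
    have hmain : Tendsto (fun ρ : ℝ => 2 * (e ρ / ρ) + Real.sqrt ρ / ρ) atTop
        (nhds (2 * 0 + 0)) := (he0.const_mul 2).add hsq0
    rw [show (2 : ℝ) * 0 + 0 = 0 by ring] at hmain
    apply hmain.congr'
    filter_upwards [eventually_gt_atTop (0 : ℝ)] with ρ hρ
    rw [add_div, mul_div_assoc]
  · -- the bound
    refine ⟨Real.exp (g 0) + 2, by linarith [Real.exp_pos (g 0)], ?_⟩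
    have hC'log : 0 ≤ Real.log (Real.exp (g 0) + 2) :=
      Real.log_nonneg (by linarith [Real.exp_pos (g 0)])
    intro ρ hρ
    rcases eq_or_lt_of_le hρ with hρ0 | hρpos
    · -- ρ = 0
      have h1 : g ρ ≤ Real.log (Real.exp (g 0) + 2) := by
        rw [← hρ0]
        calc g 0 = Real.log (Real.exp (g 0)) := (Real.log_exp _).symm
        _ ≤ Real.log (Real.exp (g 0) + 2) :=
          Real.log_le_log (Real.exp_pos _) (by linarith)
      have h2 : 0 ≤ F (2 * e ρ + Real.sqrt ρ) := by
        apply hFnonneg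
        have := he_nonneg ρ
        have := Real.sqrt_nonneg ρ
        linarith
      linarith
    · -- ρ > 0
      have hpos : 0 < e ρ + Real.sqrt ρ := by
        have := he_nonneg ρ
        have := Real.sqrt_pos.2 hρpos
        linarith
      obtain ⟨σ, hσS, hσlt⟩ := Real.lt_sInf_add_pos (hSne ρ) hpos
      have hσle : σ ≤ 2 * e ρ + Real.sqrt ρ := by
        have : sInf (S ρ) = e ρ := rfl
        rw [this] at hσlt
        linarith
      have h1 : g ρ ≤ F (2 * e ρ + Real.sqrt ρ) :=
        le_trans hσS.2 (hFmono σ _ hσS.1 hσle)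
      linarith
end
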